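/- arXiv:2602.11306 — 8 statements merged into one kernel-verified Lean document; each statement's English description precedes it below -/
import Mathlib

section
/- Let 𝔤 be a Lie algebra over a field of characteristic zero and let R : 𝔤 → 𝔤 be a linear map satisfying the modified classical Yang–Baxter equation. Then the R-bracket [X,Y]_R = (1/2)([R(X),Y] + [X,R(Y)]) is bilinear, alternating, and satisfies the Jacobi identity; hence (𝔤, [·,·]_R) is again a Lie algebra, denoted 𝔤_R. -/
/-!
Bilinearity and skew-symmetry of the `R`-bracket hold for any linear `R`. For the Jacobi
identity, the mCYBE says exactly that `R [Y,Z]_R = (1/2)([R Y, R Z] + [Y, Z])`, so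
`[X, [Y,Z]_R]_R` expands to a quarter of
`[R X, [R Y, Z]] + [R X, [Y, R Z]] + [X, [R Y, R Z]] + [X, [Y, Z]]`. Summing cyclically, these
twelve terms regroup into the Jacobi identities of `𝔤` for the triples
`(R X, R Y, Z)`, `(R Y, R Z, X)`, `(R Z, R X, Y)` and `(X, Y, Z)`.
-/

/-- The `R`-bracket `[X,Y]_R = (1/2)([R(X),Y] + [X,R(Y)])` associated to a linear map `R`
on a Lie algebra. -/
def rBracket {K : Type*} [Field K] {L : Type*} [LieRing L] [LieAlgebra K L]
    (R : L →ₗ[K] L) (X Y : L) : L :=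
  (2 : K)⁻¹ • (⁅R X, Y⁆ + ⁅X, R Y⁆)

def SatisfiesMCYBE {K : Type*} [Field K] {L : Type*} [LieRing L] [LieAlgebra K L]
    (R : L →ₗ[K] L) : Prop :=
  ∀ X Y : L, ⁅R X, R Y⁆ - R (⁅R X, Y⁆ + ⁅X, R Y⁆) = -⁅X, Y⁆

section RBracket

variable {K : Type*} [Field K] {L : Type*} [LieRing L] [LieAlgebra K L] (R : L →ₗ[K] L)

theorem rBracket_add_left (X X' Y : L) :
    rBracket R (X + X') Y = rBracket R X Y + rBracket R X' Y := by
  simp only [rBracket, map_add, add_lie, ← smul_add]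
  abel_nf

theorem rBracket_smul_left (a : K) (X Y : L) :
    rBracket R (a • X) Y = a • rBracket R X Y := by
  simp only [rBracket, map_smul, smul_lie, ← smul_add, smul_comm a]

theorem rBracket_add_right (X Y Y' : L) :
    rBracket R X (Y + Y') = rBracket R X Y + rBracket R X Y' := by
  simp only [rBracket, map_add, lie_add, ← smul_add]
  abel_nf

theorem rBracket_smul_right (a : K) (X Y : L) :
    rBracket R X (a • Y) = a • rBracket R X Y := by
  simp only [rBracket, map_smul, lie_smul, ← smul_add, smul_comm a]

theorem rBracket_self (X : L) : rBracket R X X = 0 := by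
  rw [rBracket, ← lie_skew X (R X), add_neg_cancel, smul_zero]

variable {R}

theorem SatisfiesMCYBE.map_lie_add_lie (hR : SatisfiesMCYBE R) (Y Z : L) :
    R (⁅R Y, Z⁆ + ⁅Y, R Z⁆) = ⁅R Y, R Z⁆ + ⁅Y, Z⁆ := by
  linear_combination (norm := abel) -(hR Y Z)

theorem SatisfiesMCYBE.rBracket_rBracket (hR : SatisfiesMCYBE R) (X Y Z : L) :
    rBracket R X (rBracket R Y Z) =
      ((2 : K)⁻¹ * (2 : K)⁻¹) •
        (⁅R X, ⁅R Y, Z⁆⁆ + ⁅R X, ⁅Y, R Z⁆⁆ + ⁅X, ⁅R Y, R Z⁆⁆ + ⁅X, ⁅Y, Z⁆⁆) := by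
  simp only [rBracket, map_smul, hR.map_lie_add_lie, lie_smul, lie_add]
  module

theorem SatisfiesMCYBE.rBracket_jacobi (hR : SatisfiesMCYBE R) (X Y Z : L) :
    rBracket R X (rBracket R Y Z) + rBracket R Y (rBracket R Z X)
      + rBracket R Z (rBracket R X Y) = 0 := by
  rw [hR.rBracket_rBracket, hR.rBracket_rBracket, hR.rBracket_rBracket]
  linear_combination (norm := module) ((2 : K)⁻¹ * (2 : K)⁻¹) •
    (lie_jacobi (R X) (R Y) Z + lie_jacobi (R Y) (R Z) X + lie_jacobi (R Z) (R X) Y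
      + lie_jacobi X Y Z)

end RBracket

theorem statement0_general {K : Type*} [Field K] {L : Type*} [LieRing L] [LieAlgebra K L]
    (R : L →ₗ[K] L)
    (hR : ∀ X Y : L, ⁅R X, R Y⁆ - R (⁅R X, Y⁆ + ⁅X, R Y⁆) = -⁅X, Y⁆) :
    (∀ (a : K) (X X' Y : L),
        rBracket R (a • X + X') Y = a • rBracket R X Y + rBracket R X' Y) ∧
    (∀ (a : K) (X Y Y' : L),
        rBracket R X (a • Y + Y') = a • rBracket R X Y + rBracket R X Y') ∧
    (∀ X : L, rBracket R X X = 0) ∧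
    (∀ X Y Z : L,
        rBracket R X (rBracket R Y Z) + rBracket R Y (rBracket R Z X)
          + rBracket R Z (rBracket R X Y) = 0) := by
  refine ⟨fun a X X' Y => ?_, fun a X Y Y' => ?_, rBracket_self R,
    SatisfiesMCYBE.rBracket_jacobi hR⟩
  · rw [rBracket_add_left, rBracket_smul_left]
  · rw [rBracket_add_right, rBracket_smul_right]

/-- If `R` is a linear solution of the modified classical Yang–Baxter equation on a Lie
algebra `𝔤` over a field of characteristic zero, then the `R`-bracket is bilinear,
alternating and satisfies the Jacobi identity, i.e. `(𝔤, [·,·]_R)` is a Lie algebra. -/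
theorem statement0 {K : Type*} [Field K] [CharZero K] {L : Type*} [LieRing L] [LieAlgebra K L]
    (R : L →ₗ[K] L)
    (hR : ∀ X Y : L, ⁅R X, R Y⁆ - R (⁅R X, Y⁆ + ⁅X, R Y⁆) = -⁅X, Y⁆) :
    (∀ (a : K) (X X' Y : L),
        rBracket R (a • X + X') Y = a • rBracket R X Y + rBracket R X' Y) ∧
    (∀ (a : K) (X Y Y' : L),
        rBracket R X (a • Y + Y') = a • rBracket R X Y + rBracket R X Y') ∧
    (∀ X : L, rBracket R X X = 0) ∧
    (∀ X Y Z : L,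
        rBracket R X (rBracket R Y Z) + rBracket R Y (rBracket R Z X)
          + rBracket R Z (rBracket R X Y) = 0) :=
  statement0_general R hR
end

section
/- Let 𝔤 be a Lie algebra over a field of characteristic zero and let R : 𝔤 → 𝔤 be a linear solution of the mCYBE. Then the map i_R : 𝔤 → 𝔤 × 𝔤 defined by i_R(X) = (R_+(X), R_−(X)) is an injective Lie algebra homomorphism from 𝔤_R = (𝔤, [·,·]_R) into the direct sum Lie algebra 𝔤 ⊕ 𝔤 with componentwise bracket. Moreover, every X ∈ 𝔤 can be written uniquely as X = X_+ − X_− with (X_+, X_−) in the image of i_R, namely X_± = R_±(X). -/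
/-- `R₊ = (1/2)(R + id)`. -/
def Rplus {K : Type*} [Field K] {L : Type*} [LieRing L] [LieAlgebra K L]
    (R : L →ₗ[K] L) : L →ₗ[K] L :=
  (2 : K)⁻¹ • (R + LinearMap.id)

/-- `R₋ = (1/2)(R − id)`. -/
def Rminus {K : Type*} [Field K] {L : Type*} [LieRing L] [LieAlgebra K L]
    (R : L →ₗ[K] L) : L →ₗ[K] L :=
  (2 : K)⁻¹ • (R - LinearMap.id)

/-!
Both `R₊ − R₋ = id` and the homomorphism property are direct computations: `i_R` has the left
inverse `(a, b) ↦ a − b`, and by the mCYBE, `R([RX, Y] + [X, RY]) = [RX, RY] + [X, Y]`, so that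
`4 R₊[X, Y]_R = [RX, RY] + [X, Y] + [RX, Y] + [X, RY] = [(R + 1)X, (R + 1)Y]`, and likewise for `R₋`
with the signs of the mixed terms flipped.
-/

section

variable {K : Type*} [Field K] {L : Type*} [LieRing L] [LieAlgebra K L] (R : L →ₗ[K] L)

theorem Rplus_sub_Rminus [NeZero (2 : K)] (X : L) : Rplus R X - Rminus R X = X := by
  simp only [Rplus, Rminus, LinearMap.smul_apply, LinearMap.add_apply, LinearMap.sub_apply,
    LinearMap.id_apply, ← smul_sub, add_sub_sub_cancel, ← two_smul K X, smul_smul,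
    inv_mul_cancel₀ (two_ne_zero : (2 : K) ≠ 0), one_smul]

theorem leftInverse_sub_Rplus_Rminus [NeZero (2 : K)] :
    Function.LeftInverse (fun q : L × L => q.1 - q.2) (fun X => (Rplus R X, Rminus R X)) :=
  Rplus_sub_Rminus R

variable {R}

theorem map_lie_add_lie_of_mCYBE
    (hR : ∀ X Y : L, ⁅R X, R Y⁆ - R (⁅R X, Y⁆ + ⁅X, R Y⁆) = -⁅X, Y⁆) (X Y : L) :
    R (⁅R X, Y⁆ + ⁅X, R Y⁆) = ⁅R X, R Y⁆ + ⁅X, Y⁆ := by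
  linear_combination (norm := module) -hR X Y

theorem Rplus_rBracket (hR : ∀ X Y : L, ⁅R X, R Y⁆ - R (⁅R X, Y⁆ + ⁅X, R Y⁆) = -⁅X, Y⁆)
    (X Y : L) : Rplus R (rBracket R X Y) = ⁅Rplus R X, Rplus R Y⁆ := by
  simp only [Rplus, rBracket, LinearMap.smul_apply, LinearMap.add_apply, LinearMap.id_apply,
    map_smul, map_lie_add_lie_of_mCYBE hR, smul_lie, lie_smul, add_lie, lie_add]
  module

theorem Rminus_rBracket (hR : ∀ X Y : L, ⁅R X, R Y⁆ - R (⁅R X, Y⁆ + ⁅X, R Y⁆) = -⁅X, Y⁆)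
    (X Y : L) : Rminus R (rBracket R X Y) = ⁅Rminus R X, Rminus R Y⁆ := by
  simp only [Rminus, rBracket, LinearMap.smul_apply, LinearMap.sub_apply, LinearMap.id_apply,
    map_smul, map_lie_add_lie_of_mCYBE hR, smul_lie, lie_smul, sub_lie, lie_sub]
  module

end

/-- The map `i_R : X ↦ (R₊X, R₋X)` is an injective Lie algebra homomorphism from
`𝔤_R` into the direct sum Lie algebra `𝔤 ⊕ 𝔤` (with componentwise bracket), and every
`X ∈ 𝔤` decomposes uniquely as `X = X₊ − X₋` with `(X₊, X₋)` in the image of `i_R`. -/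
theorem statement2 {K : Type*} [Field K] [CharZero K] {L : Type*} [LieRing L] [LieAlgebra K L]
    (R : L →ₗ[K] L)
    (hR : ∀ X Y : L, ⁅R X, R Y⁆ - R (⁅R X, Y⁆ + ⁅X, R Y⁆) = -⁅X, Y⁆) :
    Function.Injective (fun X : L => (Rplus R X, Rminus R X)) ∧
    (∀ X Y : L,
      (Rplus R (rBracket R X Y), Rminus R (rBracket R X Y))
        = (⁅Rplus R X, Rplus R Y⁆, ⁅Rminus R X, Rminus R Y⁆)) ∧
    (∀ X : L, ∃! q : L × L,
      q ∈ Set.range (fun Y : L => (Rplus R Y, Rminus R Y)) ∧ X = q.1 - q.2) := by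
  refine ⟨(leftInverse_sub_Rplus_Rminus R).injective,
    fun X Y => Prod.ext (Rplus_rBracket hR X Y) (Rminus_rBracket hR X Y), fun X => ?_⟩
  refine ⟨(Rplus R X, Rminus R X), ⟨⟨X, rfl⟩, (Rplus_sub_Rminus R X).symm⟩, ?_⟩
  rintro _ ⟨⟨Y, rfl⟩, hX⟩
  rw [hX, Rplus_sub_Rminus]
end

section
/- Fix n ≥ 1 and N ≥ 1. Suppose M_n(ℂ) = 𝔤_+ ∔ 𝔤_− is a direct sum of vector subspaces, with P_± the projection onto 𝔤_± along 𝔤_∓. For k = 1,…,N, let F_k : M_n(ℂ) → M_n(ℂ) be conjugation-equivariant maps, and let L₀ ∈ M_n(ℂ). Let g_± : ℝᴺ → GL_n(ℂ) be differentiable maps with g_±(0) = 1 such that (∂_{t^k} g_±(t)) g_±(t)⁻¹ ∈ 𝔤_± for all t ∈ ℝᴺ and all k, and which solve the factorization problem exp(− Σ_{k=1}^N t^k F_k(L₀)) = g_+(t)⁻¹ g_−(t) for all t ∈ ℝᴺ. Set L(t) := g_+(t) L₀ g_+(t)⁻¹. Then: (i) L(t) = g_−(t) L₀ g_−(t)⁻¹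 for all t, and L(0) = L₀; (ii) L solves the hierarchy of Lax equations ∂_{t^k} L(t) = [P_+(F_k(L(t))), L(t)] = −[P_−(F_k(L(t))), L(t)] for k = 1,…,N; (iii) ∂_{t^k} g_+(t) = P_+(F_k(L(t))) g_+(t) and ∂_{t^k} g_−(t) = −P_−(F_k(L(t))) g_−(t) for all t and k. -/
/-!
Write `g₋ = g₊ E` with `E = exp (-∑ tᵏ F_k(L₀))`. A conjugation-equivariant map sends `A` to an
element commuting with everything that commutes with `A` (shift the commuting element by a scalar
to make it invertible), so the `F_k(L₀)` commute with each other and with `L₀`; hence `E` commutes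
with `L₀`, which is (i). Differentiating `g₋ = g₊ E` gives
`(∂ₖg₊)g₊⁻¹ - (∂ₖg₋)g₋⁻¹ = g₋ F_k(L₀) g₋⁻¹ = F_k(L)`, a decomposition of `F_k(L)` along
`𝔤₊ ∔ 𝔤₋`, so the two terms are `P₊F_k(L)` and `-P₋F_k(L)`: this is (iii). Finally
`∂ₖ(g₊ L₀ g₊⁻¹) = [(∂ₖg₊)g₊⁻¹, L]`, and `[F_k(L), L] = 0` gives the second form of (ii).
-/

open Matrix

attribute [local instance] Matrix.normedAddCommGroup Matrix.normedSpace

/-- The paper's `P₊`; its `P₋` is `projOnto gm gp h.symm`. -/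
noncomputable def projOnto {n : ℕ} (gp gm : Submodule ℂ (Matrix (Fin n) (Fin n) ℂ))
    (h : IsCompl gp gm) : Matrix (Fin n) (Fin n) ℂ →ₗ[ℂ] Matrix (Fin n) (Fin n) ℂ :=
  gp.subtype ∘ₗ Submodule.linearProjOfIsCompl gp gm h

theorem Matrix.commute_apply_of_conj_equivariant {K : Type*} [Field K] [Infinite K]
    {m : Type*} [Fintype m] [DecidableEq m] {F : Matrix m m K → Matrix m m K}
    (hF : ∀ g X : Matrix m m K, IsUnit g → F (g * X * g⁻¹) = g * F X * g⁻¹)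
    {A X : Matrix m m K} (h : Commute A X) : Commute (F A) X := by
  obtain ⟨c, hc⟩ := (Matrix.finite_spectrum X).exists_notMem
  set u := algebraMap K (Matrix m m K) c - X
  have hu : IsUnit u.det := (Matrix.isUnit_iff_isUnit_det u).mp (spectrum.notMem_iff.mp hc)
  have huA : Commute u A := (Algebra.commute_algebraMap_left c A).sub_left h.symm
  have hFu : Commute (F A) u := by
    have hconj : u * A * u⁻¹ = A := by rw [huA.eq, Matrix.mul_nonsing_inv_cancel_right _ _ hu]
    have := hF u A ((Matrix.isUnit_iff_isUnit_det u).mpr hu)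
    rw [hconj] at this
    calc F A * u = u * F A * u⁻¹ * u := by rw [← this]
      _ = u * F A := Matrix.nonsing_inv_mul_cancel_right _ _ hu
  simpa [u] using (Algebra.commute_algebraMap_right c (F A)).sub_right hFu

section BanachAlgebra

variable {𝕜 : Type*} [NontriviallyNormedField 𝕜] {𝔸 : Type*} [NormedRing 𝔸]
  [NormedAlgebra 𝕜 𝔸] [HasSummableGeomSeries 𝔸] {E : Type*} [NormedAddCommGroup E]
  [NormedSpace 𝕜 E]

theorem fderiv_mul_mul_ringInverse_apply {g : E → 𝔸} {x : E} (hg : DifferentiableAt 𝕜 g x)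
    (hu : IsUnit (g x)) (a : 𝔸) (v : E) :
    fderiv 𝕜 (fun y => g y * a * Ring.inverse (g y)) x v =
      ⁅fderiv 𝕜 g x v * Ring.inverse (g x), g x * a * Ring.inverse (g x)⁆ := by
  have H : HasFDerivAt (fun y => g y * a * Ring.inverse (g y)) _ x :=
    (hg.hasFDerivAt.mul_const' a).fun_mul'
      ((hasFDerivAt_ringInverse (𝕜 := 𝕜) hu.unit).comp x hg.hasFDerivAt)
  rw [H.fderiv]
  simp only [ContinuousLinearMap.neg_comp, smul_neg, _root_.add_apply, _root_.neg_apply,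
    _root_.smul_apply, ContinuousLinearMap.comp_apply, ContinuousLinearMap.mulLeftRight_apply,
    smul_eq_mul, MulOpposite.smul_eq_mul_unop, MulOpposite.unop_op]
  rw [← Ring.inverse_unit, hu.unit_spec, Ring.lie_def]
  simp only [mul_assoc, Ring.inverse_mul_cancel_left _ _ hu]
  noncomm_ring

end BanachAlgebra

section Exponential

open NormedSpace

variable {𝕂 : Type*} [RCLike 𝕂] {𝔸 : Type*} [NormedRing 𝔸] [NormedAlgebra 𝕂 𝔸]
  [CompleteSpace 𝔸] {ι : Type*} [Fintype ι]

theorem differentiable_exp_neg_sum_smul (Y : ι → 𝔸) :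
    Differentiable 𝕂 fun t : ι → 𝕂 => exp (-(∑ i, t i • Y i)) := fun t =>
  (exp_analytic (𝕂 := 𝕂) _).differentiableAt.comp t (by fun_prop)

variable [DecidableEq ι]

theorem fderiv_exp_neg_sum_smul_apply_single {Y : ι → 𝔸} (hY : ∀ i j, Commute (Y i) (Y j))
    (t : ι → 𝕂) (k : ι) :
    fderiv 𝕂 (fun t : ι → 𝕂 => exp (-(∑ i, t i • Y i))) t (Pi.single k 1) =
      exp (-(∑ i, t i • Y i)) * -Y k := by
  have hline : ∀ s : 𝕂, exp (-(∑ i, (t + s • Pi.single k 1 : ι → 𝕂) i • Y i)) =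
      exp (-(∑ i, t i • Y i)) * exp (s • -Y k) := by
    intro s
    have hsum : -(∑ i, (t + s • Pi.single k 1 : ι → 𝕂) i • Y i) =
        -(∑ i, t i • Y i) + s • -Y k := by
      simp [add_smul, Finset.sum_add_distrib, Pi.single_apply, add_comm]
    have hcomm : Commute (-(∑ i, t i • Y i)) (s • -Y k) :=
      ((Commute.sum_left _ _ _ fun i _ => (hY i k).smul_left _).neg_left.neg_right).smul_right _
    have hball : ∀ y : 𝔸, y ∈ Metric.eball (0 : 𝔸) (expSeries 𝕂 𝔸).radius :=
      fun y => (expSeries_radius_eq_top 𝕂 𝔸).symm ▸ edist_lt_top _ _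
    rw [hsum, exp_add_of_commute_of_mem_ball hcomm (hball _) (hball _)]
  have hderiv := (hasDerivAt_exp_smul_const (-Y k) (0 : 𝕂)).const_mul (exp (-(∑ i, t i • Y i)))
  rw [zero_smul, exp_zero, one_mul] at hderiv
  rw [← (differentiable_exp_neg_sum_smul Y t).lineDeriv_eq_fderiv, lineDeriv]
  simp only [hline]
  exact hderiv.deriv

theorem fderiv_mul_exp_neg_sum_smul_apply_single {Y : ι → 𝔸}
    (hY : ∀ i j, Commute (Y i) (Y j)) {g : (ι → 𝕂) → 𝔸} {t : ι → 𝕂}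
    (hg : DifferentiableAt 𝕂 g t) (k : ι) :
    fderiv 𝕂 (fun t => g t * exp (-(∑ i, t i • Y i))) t (Pi.single k 1) =
      fderiv 𝕂 g t (Pi.single k 1) * exp (-(∑ i, t i • Y i)) -
        g t * exp (-(∑ i, t i • Y i)) * Y k := by
  rw [fderiv_fun_mul' hg (differentiable_exp_neg_sum_smul Y t)]
  simp [fderiv_exp_neg_sum_smul_apply_single hY, mul_assoc, sub_eq_neg_add]

end Exponential

section MatrixExponential

open NormedSpace

variable {m : Type*} [Fintype m] [DecidableEq m] {ι : Type*} [Fintype ι]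

theorem Matrix.mul_exp_conj_eq_conj (g : Matrix m m ℂ) {Y : ι → Matrix m m ℂ}
    {a : Matrix m m ℂ} (hY : ∀ i, Commute (Y i) a) (t : ι → ℝ) :
    g * exp (-(∑ i, t i • Y i)) * a * (g * exp (-(∑ i, t i • Y i)))⁻¹ = g * a * g⁻¹ := by
  have hcomm : Commute (exp (-(∑ i, t i • Y i))) a :=
    (Commute.sum_left _ _ _ fun i _ => (hY i).smul_left _).neg_left.exp_left
  have hE := (Matrix.isUnit_iff_isUnit_det _).mp (Matrix.isUnit_exp (-(∑ i, t i • Y i)))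
  rw [Matrix.mul_inv_rev, Matrix.mul_assoc g, hcomm.eq]
  simp only [Matrix.mul_assoc, Matrix.mul_nonsing_inv_cancel_left _ _ hE]

/- The operator norm makes square matrices a Banach algebra; it induces the same topology as the
entrywise sup norm, so derivatives computed with it are the derivatives of the statement. -/
attribute [local instance] Matrix.linftyOpNormedAddCommGroup Matrix.linftyOpNormedSpace
  Matrix.linftyOpNormedRing Matrix.linftyOpNormedAlgebra

theorem Matrix.fderiv_mul_mul_inv_apply {E : Type*} [NormedAddCommGroup E] [NormedSpace ℝ E]
    {g : E → Matrix m m ℂ} {x : E} (hg : DifferentiableAt ℝ g x) (hu : IsUnit (g x))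
    (a : Matrix m m ℂ) (v : E) :
    fderiv ℝ (fun y => g y * a * (g y)⁻¹) x v =
      ⁅fderiv ℝ g x v * (g x)⁻¹, g x * a * (g x)⁻¹⁆ := by
  simp only [Matrix.nonsing_inv_eq_ringInverse]
  exact fderiv_mul_mul_ringInverse_apply hg hu a v

theorem Matrix.fderiv_mul_inv_sub_fderiv_mul_inv_of_eq_mul_exp [DecidableEq ι]
    {Y : ι → Matrix m m ℂ} (hY : ∀ i j, Commute (Y i) (Y j)) {gP gM : (ι → ℝ) → Matrix m m ℂ}
    (hgM : ∀ t, gM t = gP t * exp (-(∑ i, t i • Y i))) {t : ι → ℝ}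
    (hgP : DifferentiableAt ℝ gP t) (k : ι) :
    fderiv ℝ gP t (Pi.single k 1) * (gP t)⁻¹ - fderiv ℝ gM t (Pi.single k 1) * (gM t)⁻¹ =
      gM t * Y k * (gM t)⁻¹ := by
  have hE := (Matrix.isUnit_iff_isUnit_det _).mp (Matrix.isUnit_exp (-(∑ i, t i • Y i)))
  have hderiv : fderiv ℝ gM t (Pi.single k 1) =
      fderiv ℝ gP t (Pi.single k 1) * exp (-(∑ i, t i • Y i)) - gM t * Y k := by
    rw [funext hgM]
    exact fderiv_mul_exp_neg_sum_smul_apply_single hY hgP k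
  rw [hderiv, hgM, Matrix.mul_inv_rev, sub_mul]
  simp only [Matrix.mul_assoc, Matrix.mul_nonsing_inv_cancel_left _ _ hE]
  abel

end MatrixExponential

section Projection

variable {n : ℕ} {gp gm : Submodule ℂ (Matrix (Fin n) (Fin n) ℂ)}

theorem projOnto_eq_projection (h : IsCompl gp gm) : projOnto gp gm h = gp.projection gm h :=
  rfl

theorem projOnto_sub_of_mem (h : IsCompl gp gm) {a b : Matrix (Fin n) (Fin n) ℂ} (ha : a ∈ gp)
    (hb : b ∈ gm) : projOnto gp gm h (a - b) = a := by
  rw [map_sub, projOnto_eq_projection, Submodule.projection_apply_of_mem_left h ha,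
    Submodule.projection_apply_of_mem_right h hb, sub_zero]

theorem projOnto_symm_sub_of_mem (h : IsCompl gp gm) {a b : Matrix (Fin n) (Fin n) ℂ}
    (ha : a ∈ gp) (hb : b ∈ gm) : projOnto gm gp h.symm (a - b) = -b := by
  rw [← neg_sub_neg b a, projOnto_sub_of_mem h.symm (neg_mem hb) (neg_mem ha)]

theorem lie_projOnto_eq_neg_lie_projOnto_symm (h : IsCompl gp gm)
    {x y : Matrix (Fin n) (Fin n) ℂ} (hxy : Commute x y) :
    ⁅projOnto gp gm h x, y⁆ = -⁅projOnto gm gp h.symm x, y⁆ := by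
  rw [eq_neg_iff_add_eq_zero]
  calc ⁅projOnto gp gm h x, y⁆ + ⁅projOnto gm gp h.symm x, y⁆
      = ⁅projOnto gp gm h x + projOnto gm gp h.symm x, y⁆ := by
        simp only [Ring.lie_def, add_mul, mul_add]; abel
    _ = 0 := by
        rw [projOnto_eq_projection, projOnto_eq_projection,
          Submodule.projection_add_projection_eq_self, hxy.lie_eq]

end Projection

theorem statement5_general (n N : ℕ)
    (gp gm : Submodule ℂ (Matrix (Fin n) (Fin n) ℂ)) (h : IsCompl gp gm)
    (F : Fin N → Matrix (Fin n) (Fin n) ℂ → Matrix (Fin n) (Fin n) ℂ)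
    (hF : ∀ (k : Fin N) (g X : Matrix (Fin n) (Fin n) ℂ), IsUnit g →
      F k (g * X * g⁻¹) = g * F k X * g⁻¹)
    (L₀ : Matrix (Fin n) (Fin n) ℂ)
    (gP gM : (Fin N → ℝ) → Matrix (Fin n) (Fin n) ℂ)
    (hgPd : Differentiable ℝ gP)
    (hgP0 : gP 0 = 1)
    (hgPu : ∀ t, IsUnit (gP t))
    (hgPtan : ∀ (t : Fin N → ℝ) (k : Fin N),
      fderiv ℝ gP t (Pi.single k 1) * (gP t)⁻¹ ∈ gp)
    (hgMtan : ∀ (t : Fin N → ℝ) (k : Fin N),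
      fderiv ℝ gM t (Pi.single k 1) * (gM t)⁻¹ ∈ gm)
    (hfact : ∀ t : Fin N → ℝ,
      NormedSpace.exp (-(∑ k, t k • F k L₀)) = (gP t)⁻¹ * gM t)
    (L : (Fin N → ℝ) → Matrix (Fin n) (Fin n) ℂ)
    (hL : ∀ t, L t = gP t * L₀ * (gP t)⁻¹) :
    ((∀ t, L t = gM t * L₀ * (gM t)⁻¹) ∧ L 0 = L₀) ∧
    (∀ (t : Fin N → ℝ) (k : Fin N),
      fderiv ℝ L t (Pi.single k 1) = ⁅projOnto gp gm h (F k (L t)), L t⁆ ∧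
      fderiv ℝ L t (Pi.single k 1) = -⁅projOnto gm gp h.symm (F k (L t)), L t⁆) ∧
    (∀ (t : Fin N → ℝ) (k : Fin N),
      fderiv ℝ gP t (Pi.single k 1) = projOnto gp gm h (F k (L t)) * gP t ∧
      fderiv ℝ gM t (Pi.single k 1) = -(projOnto gm gp h.symm (F k (L t)) * gM t)) := by
  have hFcomm : ∀ k {A X : Matrix (Fin n) (Fin n) ℂ}, Commute A X → Commute (F k A) X :=
    fun k _ _ => Matrix.commute_apply_of_conj_equivariant (hF k)
  have hPdet : ∀ t, IsUnit (gP t).det := fun t => (Matrix.isUnit_iff_isUnit_det _).mp (hgPu t)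
  have hgM : ∀ t, gM t = gP t * NormedSpace.exp (-(∑ k, t k • F k L₀)) := fun t => by
    rw [hfact, Matrix.mul_nonsing_inv_cancel_left _ _ (hPdet t)]
  have hMdet : ∀ t, IsUnit (gM t).det := fun t => (Matrix.isUnit_iff_isUnit_det _).mp
    (hgM t ▸ (hgPu t).mul (Matrix.isUnit_exp _))
  have hLM : ∀ t, L t = gM t * L₀ * (gM t)⁻¹ := fun t => by
    rw [hL, hgM, Matrix.mul_exp_conj_eq_conj _ (fun k => hFcomm k (Commute.refl L₀))]
  have hsplit : ∀ t k, F k (L t) = fderiv ℝ gP t (Pi.single k 1) * (gP t)⁻¹ -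
      fderiv ℝ gM t (Pi.single k 1) * (gM t)⁻¹ := fun t k => by
    rw [Matrix.fderiv_mul_inv_sub_fderiv_mul_inv_of_eq_mul_exp
      (fun i j => hFcomm i (hFcomm j (Commute.refl L₀)).symm) hgM (hgPd t), hLM,
      hF k _ _ ((Matrix.isUnit_iff_isUnit_det _).mpr (hMdet t))]
  have hP : ∀ t k, projOnto gp gm h (F k (L t)) = fderiv ℝ gP t (Pi.single k 1) * (gP t)⁻¹ :=
    fun t k => by rw [hsplit]; exact projOnto_sub_of_mem h (hgPtan t k) (hgMtan t k)
  have hM : ∀ t k, projOnto gm gp h.symm (F k (L t)) =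
      -(fderiv ℝ gM t (Pi.single k 1) * (gM t)⁻¹) :=
    fun t k => by rw [hsplit]; exact projOnto_symm_sub_of_mem h (hgPtan t k) (hgMtan t k)
  have hLax : ∀ t k, fderiv ℝ L t (Pi.single k 1) = ⁅projOnto gp gm h (F k (L t)), L t⁆ :=
    fun t k => by
      rw [hP, hL t, show L = fun t => gP t * L₀ * (gP t)⁻¹ from funext hL]
      exact Matrix.fderiv_mul_mul_inv_apply (hgPd t) (hgPu t) L₀ _
  refine ⟨⟨hLM, by simp [hL, hgP0]⟩, fun t k => ⟨hLax t k, (hLax t k).trans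
    (lie_projOnto_eq_neg_lie_projOnto_symm h (hFcomm k (Commute.refl _)))⟩, fun t k => ⟨?_, ?_⟩⟩
  · rw [hP, Matrix.nonsing_inv_mul_cancel_right _ _ (hPdet t)]
  · rw [hM, neg_mul, neg_neg, Matrix.nonsing_inv_mul_cancel_right _ _ (hMdet t)]

/-- The factorization theorem: if `g±` solve the factorization problem
`exp(−Σ tᵏ F_k(L₀)) = g₊(t)⁻¹ g₋(t)` with `(∂ₖg±)g±⁻¹ ∈ 𝔤±`, then
`L(t) = g₊(t) L₀ g₊(t)⁻¹ = g₋(t) L₀ g₋(t)⁻¹` solves the hierarchy of Lax equations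
`∂ₖL = [P₊(F_k(L)), L] = −[P₋(F_k(L)), L]`, and
`∂ₖg₊ = P₊(F_k(L)) g₊`, `∂ₖg₋ = −P₋(F_k(L)) g₋`. -/
theorem statement5 (n N : ℕ) (hn : 1 ≤ n) (hN : 1 ≤ N)
    (gp gm : Submodule ℂ (Matrix (Fin n) (Fin n) ℂ)) (h : IsCompl gp gm)
    (F : Fin N → Matrix (Fin n) (Fin n) ℂ → Matrix (Fin n) (Fin n) ℂ)
    (hF : ∀ (k : Fin N) (g X : Matrix (Fin n) (Fin n) ℂ), IsUnit g →
      F k (g * X * g⁻¹) = g * F k X * g⁻¹)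
    (L₀ : Matrix (Fin n) (Fin n) ℂ)
    (gP gM : (Fin N → ℝ) → Matrix (Fin n) (Fin n) ℂ)
    (hgPd : Differentiable ℝ gP) (hgMd : Differentiable ℝ gM)
    (hgP0 : gP 0 = 1) (hgM0 : gM 0 = 1)
    (hgPu : ∀ t, IsUnit (gP t)) (hgMu : ∀ t, IsUnit (gM t))
    (hgPtan : ∀ (t : Fin N → ℝ) (k : Fin N),
      fderiv ℝ gP t (Pi.single k 1) * (gP t)⁻¹ ∈ gp)
    (hgMtan : ∀ (t : Fin N → ℝ) (k : Fin N),
      fderiv ℝ gM t (Pi.single k 1) * (gM t)⁻¹ ∈ gm)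
    (hfact : ∀ t : Fin N → ℝ,
      NormedSpace.exp (-(∑ k, t k • F k L₀)) = (gP t)⁻¹ * gM t)
    (L : (Fin N → ℝ) → Matrix (Fin n) (Fin n) ℂ)
    (hL : ∀ t, L t = gP t * L₀ * (gP t)⁻¹) :
    ((∀ t, L t = gM t * L₀ * (gM t)⁻¹) ∧ L 0 = L₀) ∧
    (∀ (t : Fin N → ℝ) (k : Fin N),
      fderiv ℝ L t (Pi.single k 1) = ⁅projOnto gp gm h (F k (L t)), L t⁆ ∧
      fderiv ℝ L t (Pi.single k 1) = -⁅projOnto gm gp h.symm (F k (L t)), L t⁆) ∧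
    (∀ (t : Fin N → ℝ) (k : Fin N),
      fderiv ℝ gP t (Pi.single k 1) = projOnto gp gm h (F k (L t)) * gP t ∧
      fderiv ℝ gM t (Pi.single k 1) = -(projOnto gm gp h.symm (F k (L t)) * gM t)) :=
  statement5_general n N gp gm h F hF L₀ gP gM hgPd hgP0 hgPu hgPtan hgMtan hfact L hL
end

section
/- Under the stated setup, for all k, ℓ ∈ {1,…,K} and all t ∈ ℝᴷ the following off-shell identity holds: ∂_{t^ℓ}L_k(t) − ∂_{t^k}L_ℓ(t) + Σ_{m,n=1}^{2p} Υ_k^m(t) P_{mn}(ξ(φ(t))) Υ_ℓ^n(t) = {H_k, H_ℓ}(ξ(φ(t))). -/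
/-!
The curl `∂_ℓ L_k - ∂_k L_ℓ` of the Lagrangian coefficients consists of the exterior derivative
of `π_α dφ_α`, in which the second derivatives of `φ` cancel by symmetry and which the pullback
relation turns into `ω(a, b)` for the tangent vectors `a, b` of `ξ ∘ φ` along `t^k, t^ℓ`, plus
`-⟨∇H_k, b⟩ + ⟨∇H_ℓ, a⟩`. Since `Υ_k = aᵀω - ∇H_k`, antisymmetry of `ω` and `Pω = ωP = 1`
expand `Υ_k P Υ_ℓ` to `{H_k, H_ℓ} - ω(a, b) + ⟨∇H_k, b⟩ - ⟨∇H_ℓ, a⟩`, which cancels everything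
but the bracket.
-/

open Matrix

section LinearAlgebra

variable {ι κ : Type*} [Fintype ι] [Fintype κ]

theorem Matrix.sum_sum_mul_mul_eq_dotProduct_mulVec {R : Type*} [NonUnitalSemiring R]
    (x : ι → R) (M : Matrix ι κ R) (y : κ → R) :
    ∑ i, ∑ j, x i * M i j * y j = x ⬝ᵥ M *ᵥ y := by
  simp only [dotProduct, mulVec, Finset.mul_sum, mul_assoc]

theorem LinearMap.apply_eq_dotProduct {R : Type*} [Semiring R] [DecidableEq ι]
    (f : (ι → R) →ₗ[R] R) (v : ι → R) :
    f v = v ⬝ᵥ fun i => f (Pi.single i 1) := by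
  have hsingle : ∀ i, Pi.single i (v i) = v i • (Pi.single i 1 : ι → R) := fun i => by
    rw [← Pi.single_smul', smul_eq_mul, mul_one]
  conv_lhs => rw [← Finset.univ_sum_single v]
  simp only [hsingle, map_sum, map_smul, smul_eq_mul, dotProduct]

variable {R : Type*} [CommRing R]

theorem dotProduct_apply_sub_dotProduct_apply_of_single [DecidableEq ι]
    (A : (ι → R) →ₗ[R] ι → R) (B : (ι → R) →ₗ[R] κ → R) (ω : Matrix κ κ R)
    (h : ∀ α β, A (Pi.single β 1) α - A (Pi.single α 1) β
      = B (Pi.single α 1) ⬝ᵥ ω *ᵥ B (Pi.single β 1)) (v w : ι → R) :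
    v ⬝ᵥ A w - w ⬝ᵥ A v = B v ⬝ᵥ ω *ᵥ B w := by
  have hM : LinearMap.toMatrix' A - (LinearMap.toMatrix' A)ᵀ
      = (LinearMap.toMatrix' B)ᵀ * ω * LinearMap.toMatrix' B := by
    ext α β
    simp only [Matrix.sub_apply, transpose_apply, LinearMap.toMatrix'_apply]
    rw [h, dotProduct_mulVec]
    simp only [mul_apply, transpose_apply, LinearMap.toMatrix'_apply]
    rfl
  calc v ⬝ᵥ A w - w ⬝ᵥ A v = v ⬝ᵥ (LinearMap.toMatrix' A - (LinearMap.toMatrix' A)ᵀ) *ᵥ w := by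
        rw [sub_mulVec, dotProduct_sub, mulVec_transpose, dotProduct_comm v (w ᵥ* _),
          ← dotProduct_mulVec, LinearMap.toMatrix'_mulVec, LinearMap.toMatrix'_mulVec]
    _ = B v ⬝ᵥ ω *ᵥ B w := by
        rw [hM, ← mulVec_mulVec, ← mulVec_mulVec, dotProduct_mulVec, vecMul_transpose,
          LinearMap.toMatrix'_mulVec, LinearMap.toMatrix'_mulVec]

theorem vecMul_sub_dotProduct_mulVec_vecMul_sub [DecidableEq ι] {ω P : Matrix ι ι R}
    (hanti : ωᵀ = -ω) (hPω : P * ω = 1) (a b u v : ι → R) :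
    (a ᵥ* ω - u) ⬝ᵥ P *ᵥ (b ᵥ* ω - v)
      = u ⬝ᵥ P *ᵥ v - a ⬝ᵥ ω *ᵥ b + u ⬝ᵥ b - v ⬝ᵥ a := by
  have hωP : ω * P = 1 := mul_eq_one_comm.mp hPω
  have hb : P *ᵥ (b ᵥ* ω) = -b := by
    rw [← mulVec_transpose, hanti, mulVec_mulVec, Matrix.mul_neg, hPω, neg_mulVec, one_mulVec]
  have ha : (a ᵥ* ω) ⬝ᵥ P *ᵥ v = a ⬝ᵥ v := by
    rw [← dotProduct_mulVec, mulVec_mulVec, hωP, one_mulVec]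
  rw [mulVec_sub, hb, sub_dotProduct, dotProduct_sub, dotProduct_sub, ha, dotProduct_neg,
    dotProduct_neg, ← dotProduct_mulVec, dotProduct_comm v a]
  ring

end LinearAlgebra

section Calculus

variable {E : Type*} [NormedAddCommGroup E] [NormedSpace ℝ E] {ι : Type*} [Fintype ι]

theorem HasFDerivAt.dotProduct {f g : E → ι → ℝ} {f' g' : E →L[ℝ] ι → ℝ} {x : E}
    (hf : HasFDerivAt f f' x) (hg : HasFDerivAt g g' x) :
    HasFDerivAt (fun s => f s ⬝ᵥ g s)
      (∑ i, (f x i • (ContinuousLinearMap.proj i).comp g'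
        + g x i • (ContinuousLinearMap.proj i).comp f')) x :=
  HasFDerivAt.fun_sum fun i _ => (hasFDerivAt_pi'.1 hf i).mul (hasFDerivAt_pi'.1 hg i)

theorem fderiv_dotProduct_apply {f g : E → ι → ℝ} {x : E}
    (hf : DifferentiableAt ℝ f x) (hg : DifferentiableAt ℝ g x) (w : E) :
    fderiv ℝ (fun s => f s ⬝ᵥ g s) x w = fderiv ℝ f x w ⬝ᵥ g x + f x ⬝ᵥ fderiv ℝ g x w := by
  rw [(hf.hasFDerivAt.dotProduct hg.hasFDerivAt).fderiv]
  simp only [Finset.sum_add_distrib, _root_.add_apply, _root_.sum_apply, _root_.smul_apply,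
    ContinuousLinearMap.comp_apply, ContinuousLinearMap.proj_apply, smul_eq_mul, dotProduct,
    mul_comm]
  ring

theorem fderiv_dotProduct_fderiv_sub_sub_swap {f φ : E → ι → ℝ} {g h : E → ℝ} {t : E}
    (hf : DifferentiableAt ℝ f t) (hφ : ContDiffAt ℝ 2 φ t)
    (hg : DifferentiableAt ℝ g t) (hh : DifferentiableAt ℝ h t) (v w : E) :
    fderiv ℝ (fun s => f s ⬝ᵥ fderiv ℝ φ s v - g s) t w
        - fderiv ℝ (fun s => f s ⬝ᵥ fderiv ℝ φ s w - h s) t v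
      = fderiv ℝ f t w ⬝ᵥ fderiv ℝ φ t v - fderiv ℝ f t v ⬝ᵥ fderiv ℝ φ t w
        - fderiv ℝ g t w + fderiv ℝ h t v := by
  have hDφ : DifferentiableAt ℝ (fderiv ℝ φ) t :=
    (hφ.fderiv_right (m := 1) le_rfl).differentiableAt one_ne_zero
  have hDφu : ∀ u, DifferentiableAt ℝ (fun s => fderiv ℝ φ s u) t := fun u => by fun_prop
  have hθ : ∀ u, DifferentiableAt ℝ (fun s => f s ⬝ᵥ fderiv ℝ φ s u) t := fun u => by
    unfold dotProduct; fun_prop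
  rw [fderiv_fun_sub (hθ v) hg, fderiv_fun_sub (hθ w) hh]
  simp only [_root_.sub_apply, fderiv_dotProduct_apply hf (hDφu _),
    fderiv_clm_apply hDφ (differentiableAt_const _)]
  simp only [fderiv_fun_const, Pi.zero_apply, ContinuousLinearMap.comp_zero, zero_add,
    ContinuousLinearMap.flip_apply, hφ.isSymmSndFDerivAt (by simp) v w]
  ring

variable {κ : Type*} [Fintype κ] [DecidableEq κ]

noncomputable def coordGradient (f : (κ → ℝ) → ℝ) (x : κ → ℝ) : κ → ℝ :=
  fun n => fderiv ℝ f x (Pi.single n 1)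

theorem fderiv_comp_apply_eq_dotProduct_coordGradient {h : (κ → ℝ) → ℝ} {ψ : E → κ → ℝ} {t : E}
    (hh : DifferentiableAt ℝ h (ψ t)) (hψ : DifferentiableAt ℝ ψ t) (w : E) :
    fderiv ℝ (fun s => h (ψ s)) t w = fderiv ℝ ψ t w ⬝ᵥ coordGradient h (ψ t) := by
  rw [fderiv_fun_comp t hh hψ]
  exact (fderiv ℝ h (ψ t) : (κ → ℝ) →ₗ[ℝ] ℝ).apply_eq_dotProduct _

theorem fderiv_lagrangian_sub_swap {φ : E → ι → ℝ} {π : (ι → ℝ) → ι → ℝ} {ξ : (ι → ℝ) → κ → ℝ}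
    {h₁ h₂ : (κ → ℝ) → ℝ} {ω : Matrix κ κ ℝ} {t : E} (hφ : ContDiffAt ℝ 2 φ t)
    (hπ : DifferentiableAt ℝ π (φ t)) (hξ : DifferentiableAt ℝ ξ (φ t))
    (hh₁ : DifferentiableAt ℝ h₁ (ξ (φ t))) (hh₂ : DifferentiableAt ℝ h₂ (ξ (φ t)))
    (hpull : ∀ v w, v ⬝ᵥ fderiv ℝ π (φ t) w - w ⬝ᵥ fderiv ℝ π (φ t) v
      = fderiv ℝ ξ (φ t) v ⬝ᵥ ω *ᵥ fderiv ℝ ξ (φ t) w) (v w : E) :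
    fderiv ℝ (fun s => π (φ s) ⬝ᵥ fderiv ℝ φ s v - h₁ (ξ (φ s))) t w
        - fderiv ℝ (fun s => π (φ s) ⬝ᵥ fderiv ℝ φ s w - h₂ (ξ (φ s))) t v
      = fderiv ℝ (fun s => ξ (φ s)) t v ⬝ᵥ ω *ᵥ fderiv ℝ (fun s => ξ (φ s)) t w
        - fderiv ℝ (fun s => ξ (φ s)) t w ⬝ᵥ coordGradient h₁ (ξ (φ t))
        + fderiv ℝ (fun s => ξ (φ s)) t v ⬝ᵥ coordGradient h₂ (ξ (φ t)) := by
  have hφd : DifferentiableAt ℝ φ t := hφ.differentiableAt two_ne_zero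
  have hξφ : DifferentiableAt ℝ (fun s => ξ (φ s)) t := hξ.comp t hφd
  rw [fderiv_dotProduct_fderiv_sub_sub_swap (f := fun s => π (φ s)) (g := fun s => h₁ (ξ (φ s)))
      (h := fun s => h₂ (ξ (φ s))) (hπ.comp t hφd) hφ (hh₁.comp t hξφ) (hh₂.comp t hξφ),
    fderiv_comp_apply_eq_dotProduct_coordGradient (ψ := fun s => ξ (φ s)) hh₁ hξφ,
    fderiv_comp_apply_eq_dotProduct_coordGradient (ψ := fun s => ξ (φ s)) hh₂ hξφ,
    fderiv_fun_comp t hξ hφd, fderiv_fun_comp t hπ hφd]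
  simp only [ContinuousLinearMap.comp_apply]
  rw [dotProduct_comm _ (fderiv ℝ φ t v), dotProduct_comm _ (fderiv ℝ φ t w), hpull]

end Calculus

theorem statement7_general (K M p : ℕ)
    (φ : (Fin K → ℝ) → (Fin M → ℝ)) (hφ : ContDiff ℝ 2 φ)
    (π : (Fin M → ℝ) → (Fin M → ℝ)) (hπ : ContDiff ℝ 1 π)
    (ξ : (Fin M → ℝ) → (Fin (2 * p) → ℝ)) (hξ : ContDiff ℝ 1 ξ)
    (H : Fin K → (Fin (2 * p) → ℝ) → ℝ) (hH : ∀ k, ContDiff ℝ 1 (H k))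
    (ω P : (Fin (2 * p) → ℝ) → Matrix (Fin (2 * p)) (Fin (2 * p)) ℝ)
    (hanti : ∀ x, (ω x)ᵀ = -ω x)
    (hPω : ∀ x, P x * ω x = 1)
    (hpull : ∀ (y : Fin M → ℝ) (α β : Fin M),
      fderiv ℝ π y (Pi.single β 1) α - fderiv ℝ π y (Pi.single α 1) β
        = ∑ m, ∑ n, fderiv ℝ ξ y (Pi.single α 1) m * ω (ξ y) m n
            * fderiv ℝ ξ y (Pi.single β 1) n)
    (Lag : Fin K → (Fin K → ℝ) → ℝ)
    (hLag : ∀ k t, Lag k t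
      = ∑ α, π (φ t) α * fderiv ℝ φ t (Pi.single k 1) α - H k (ξ (φ t)))
    (Υ : Fin K → Fin (2 * p) → (Fin K → ℝ) → ℝ)
    (hΥ : ∀ k n t, Υ k n t
      = ∑ m, ω (ξ (φ t)) m n * fderiv ℝ (fun s => ξ (φ s)) t (Pi.single k 1) m
        - fderiv ℝ (H k) (ξ (φ t)) (Pi.single n 1))
    (k ℓ : Fin K) (t : Fin K → ℝ) :
    fderiv ℝ (Lag k) t (Pi.single ℓ 1) - fderiv ℝ (Lag ℓ) t (Pi.single k 1)
        + ∑ m, ∑ n, Υ k m t * P (ξ (φ t)) m n * Υ ℓ n t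
      = ∑ m, ∑ n, P (ξ (φ t)) m n * fderiv ℝ (H k) (ξ (φ t)) (Pi.single m 1)
          * fderiv ℝ (H ℓ) (ξ (φ t)) (Pi.single n 1) := by
  have hπd : Differentiable ℝ π := hπ.differentiable one_ne_zero
  have hξd : Differentiable ℝ ξ := hξ.differentiable one_ne_zero
  have hHd : ∀ j, Differentiable ℝ (H j) := fun j => (hH j).differentiable one_ne_zero
  set x := ξ (φ t)
  set Dψ := fderiv ℝ (fun s => ξ (φ s)) t
  have hL : ∀ j, Lag j = fun s => π (φ s) ⬝ᵥ fderiv ℝ φ s (Pi.single j 1) - H j (ξ (φ s)) :=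
    fun j => funext (hLag j)
  have hEL : ∀ j, (fun n => Υ j n t) = Dψ (Pi.single j 1) ᵥ* ω x - coordGradient (H j) x :=
    fun j => funext fun n => by simp only [hΥ, Pi.sub_apply, vecMul, dotProduct, mul_comm]; rfl
  have hpullback := dotProduct_apply_sub_dotProduct_apply_of_single
    (fderiv ℝ π (φ t) : (Fin M → ℝ) →ₗ[ℝ] Fin M → ℝ) (fderiv ℝ ξ (φ t)) (ω x) fun α β => by
      rw [← Matrix.sum_sum_mul_mul_eq_dotProduct_mulVec]
      exact hpull (φ t) α β
  have hbracket : ∑ m, ∑ n, P x m n * fderiv ℝ (H k) x (Pi.single m 1)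
      * fderiv ℝ (H ℓ) x (Pi.single n 1)
      = coordGradient (H k) x ⬝ᵥ P x *ᵥ coordGradient (H ℓ) x := by
    rw [← Matrix.sum_sum_mul_mul_eq_dotProduct_mulVec]
    simp only [mul_comm (P x _ _)]
    rfl
  rw [hL, hL, fderiv_lagrangian_sub_swap hφ.contDiffAt (hπd _) (hξd _) (hHd k _) (hHd ℓ _)
      hpullback, Matrix.sum_sum_mul_mul_eq_dotProduct_mulVec (fun m => Υ k m t), hEL k, hEL ℓ,
    vecMul_sub_dotProduct_mulVec_vecMul_sub (hanti x) (hPω x), hbracket,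
    dotProduct_comm (Dψ _) (coordGradient (H k) x),
    dotProduct_comm (Dψ _) (coordGradient (H ℓ) x)]
  ring

/-- The off-shell identity
`∂_{t^ℓ}L_k − ∂_{t^k}L_ℓ + Σ_{m,n} Υ_k^m P_{mn} Υ_ℓ^n = {H_k, H_ℓ}∘(ξ∘φ)`
relating the coefficients of the Lagrangian one-form, the Euler–Lagrange expressions, the
Poisson tensor and the Poisson bracket of the Hamiltonians. -/
theorem statement7 (K M p : ℕ) (hK : 1 ≤ K) (hM : 1 ≤ M) (hp : 1 ≤ p)
    (φ : (Fin K → ℝ) → (Fin M → ℝ)) (hφ : ContDiff ℝ 2 φ)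
    (π : (Fin M → ℝ) → (Fin M → ℝ)) (hπ : ContDiff ℝ 1 π)
    (ξ : (Fin M → ℝ) → (Fin (2 * p) → ℝ)) (hξ : ContDiff ℝ 1 ξ)
    (H : Fin K → (Fin (2 * p) → ℝ) → ℝ) (hH : ∀ k, ContDiff ℝ 1 (H k))
    (ω P : (Fin (2 * p) → ℝ) → Matrix (Fin (2 * p)) (Fin (2 * p)) ℝ)
    (hω : Continuous ω) (hP : Continuous P)
    (hanti : ∀ x, (ω x)ᵀ = -ω x)
    (hPω : ∀ x, P x * ω x = 1)
    (hpull : ∀ (y : Fin M → ℝ) (α β : Fin M),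
      fderiv ℝ π y (Pi.single β 1) α - fderiv ℝ π y (Pi.single α 1) β
        = ∑ m, ∑ n, fderiv ℝ ξ y (Pi.single α 1) m * ω (ξ y) m n
            * fderiv ℝ ξ y (Pi.single β 1) n)
    (Lag : Fin K → (Fin K → ℝ) → ℝ)
    (hLag : ∀ k t, Lag k t
      = ∑ α, π (φ t) α * fderiv ℝ φ t (Pi.single k 1) α - H k (ξ (φ t)))
    (Υ : Fin K → Fin (2 * p) → (Fin K → ℝ) → ℝ)
    (hΥ : ∀ k n t, Υ k n t
      = ∑ m, ω (ξ (φ t)) m n * fderiv ℝ (fun s => ξ (φ s)) t (Pi.single k 1) m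
        - fderiv ℝ (H k) (ξ (φ t)) (Pi.single n 1))
    (k ℓ : Fin K) (t : Fin K → ℝ) :
    fderiv ℝ (Lag k) t (Pi.single ℓ 1) - fderiv ℝ (Lag ℓ) t (Pi.single k 1)
        + ∑ m, ∑ n, Υ k m t * P (ξ (φ t)) m n * Υ ℓ n t
      = ∑ m, ∑ n, P (ξ (φ t)) m n * fderiv ℝ (H k) (ξ (φ t)) (Pi.single m 1)
          * fderiv ℝ (H ℓ) (ξ (φ t)) (Pi.single n 1) :=
  statement7_general K M p φ hφ π hπ ξ hξ H hH ω P hanti hPω hpull Lag hLag Υ hΥ k ℓ t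
end

section
/- Let T ≥ 1 be an integer, let ω ∈ ℂ be a primitive T-th root of unity, let l ∈ ℤ, and let [l] ∈ {0, 1, …, T−1} be the residue of l modulo T. Then for all z₁, z₂ ∈ ℂ with z₁^T ≠ z₂^T one has z₁^{T−1−[l]} z₂^{[l]} / (z₁^T − z₂^T) = (1/T) Σ_{k=0}^{T−1} ω^{−kl} / (z₁ − ω^k z₂). (Note that z₁^T ≠ z₂^T guarantees z₁ ≠ ω^k z₂ for every k, so all denominators are nonzero.) -/
/-! Multiplying the right-hand side by `z₁^T − z₂^T` and expanding each
`(z₁^T − z₂^T) / (z₁ − ω^k z₂)` as a geometric sum `Σ_j (ω^k z₂)^j z₁^(T−1−j)` turns it into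
`Σ_j (Σ_k (ω^(j−l))^k) z₂^j z₁^(T−1−j)`. The inner sum is a geometric sum of the
`T`-th root of unity `ω^(j−l)`, hence `T` when `j ≡ l (mod T)` and `0` otherwise, so only
`j = [l]` survives. -/

open Finset

theorem sub_pow_eq_sum_mul_sub_of_pow_eq_one {K : Type*} [CommRing K] {ζ : K} {T : ℕ}
    (hζ : ζ ^ T = 1) (z₁ z₂ : K) :
    z₁ ^ T - z₂ ^ T = (∑ j ∈ range T, (ζ * z₂) ^ j * z₁ ^ (T - 1 - j)) * (z₁ - ζ * z₂) := by
  rw [← geom_sum₂_comm, geom_sum₂_mul, mul_pow, hζ, one_mul]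

theorem sub_mul_ne_zero_of_pow_ne_of_pow_eq_one {K : Type*} [CommRing K] {ζ : K} {T : ℕ}
    (hζ : ζ ^ T = 1) {z₁ z₂ : K} (h : z₁ ^ T ≠ z₂ ^ T) : z₁ - ζ * z₂ ≠ 0 := by
  intro h0
  rw [← sub_ne_zero, sub_pow_eq_sum_mul_sub_of_pow_eq_one hζ, h0, mul_zero] at h
  exact h rfl

theorem Int.dvd_natCast_sub_iff_eq_toNat_emod {T j : ℕ} (hj : j < T) (l : ℤ) :
    (T : ℤ) ∣ j - l ↔ j = (l % T).toNat := by
  have := Int.emod_nonneg l (b := T) (by omega)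
  rw [← Int.modEq_iff_dvd, Int.ModEq, Int.emod_eq_of_lt (b := T) (a := j) (by omega) (by omega)]
  omega

theorem Int.toNat_emod_lt {T : ℕ} (hT : T ≠ 0) (l : ℤ) : (l % T).toNat < T := by
  have := Int.emod_lt_of_pos l (b := T) (by omega)
  omega

namespace IsPrimitiveRoot

variable {K : Type*} [Field K] {ω : K} {T : ℕ}

theorem sum_range_zpow_pow (hω : IsPrimitiveRoot ω T) (a : ℤ) :
    ∑ k ∈ range T, (ω ^ a) ^ k = if (T : ℤ) ∣ a then (T : K) else 0 := by
  split_ifs with hdvd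
  · simp [(hω.zpow_eq_one_iff_dvd a).mpr hdvd]
  · have hωa : (ω ^ a) ^ T = 1 := by
      rw [← zpow_natCast, ← zpow_mul, mul_comm, zpow_mul, zpow_natCast, hω.pow_eq_one, one_zpow]
    rw [geom_sum_eq (mt (hω.zpow_eq_one_iff_dvd a).mp hdvd), hωa, sub_self, zero_div]

theorem zpow_div_sub_mul_sub_pow (hω : IsPrimitiveRoot ω T) {z₁ z₂ : K}
    (h : z₁ ^ T ≠ z₂ ^ T) (k : ℕ) (l : ℤ) :
    ω ^ (-(k : ℤ) * l) / (z₁ - ω ^ k * z₂) * (z₁ ^ T - z₂ ^ T)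
      = ∑ j ∈ range T, (ω ^ ((j : ℤ) - l)) ^ k * (z₂ ^ j * z₁ ^ (T - 1 - j)) := by
  have hT : T ≠ 0 := by rintro rfl; simp at h
  have hωk : (ω ^ k) ^ T = 1 := by rw [pow_right_comm, hω.pow_eq_one, one_pow]
  rw [sub_pow_eq_sum_mul_sub_of_pow_eq_one hωk,
    mul_comm _ (z₁ - ω ^ k * z₂), ← mul_assoc,
    div_mul_cancel₀ _ (sub_mul_ne_zero_of_pow_ne_of_pow_eq_one hωk h), mul_sum]
  refine sum_congr rfl fun j _ => ?_
  have hexp : ω ^ (-(k : ℤ) * l) * (ω ^ k) ^ j = (ω ^ ((j : ℤ) - l)) ^ k := by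
    rw [← pow_mul, ← zpow_natCast, ← zpow_natCast (ω ^ _), ← zpow_mul,
      ← zpow_add₀ (hω.ne_zero hT)]
    push_cast
    ring_nf
  rw [← hexp, mul_pow]
  ring

theorem sum_zpow_div_sub_mul_sub_pow (hω : IsPrimitiveRoot ω T) {z₁ z₂ : K}
    (h : z₁ ^ T ≠ z₂ ^ T) (l : ℤ) :
    (∑ k ∈ range T, ω ^ (-(k : ℤ) * l) / (z₁ - ω ^ k * z₂)) * (z₁ ^ T - z₂ ^ T)
      = T * (z₂ ^ (l % T).toNat * z₁ ^ (T - 1 - (l % T).toNat)) := by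
  have hT : T ≠ 0 := by rintro rfl; simp at h
  rw [sum_mul, sum_congr rfl fun k _ => hω.zpow_div_sub_mul_sub_pow h k l, sum_comm]
  simp_rw [← sum_mul, hω.sum_range_zpow_pow, ite_mul, zero_mul]
  rw [sum_congr rfl fun j hj =>
    if_congr (Int.dvd_natCast_sub_iff_eq_toNat_emod (mem_range.mp hj) l) rfl rfl]
  rw [sum_ite_eq', if_pos (mem_range.mpr (Int.toNat_emod_lt hT l))]

end IsPrimitiveRoot

theorem statement12_general (T : ℕ) (ω : ℂ) (hω : IsPrimitiveRoot ω T)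
    (l : ℤ) (z₁ z₂ : ℂ) (h : z₁ ^ T ≠ z₂ ^ T) :
    z₁ ^ (T - 1 - (l % (T : ℤ)).toNat) * z₂ ^ (l % (T : ℤ)).toNat / (z₁ ^ T - z₂ ^ T)
      = (1 / (T : ℂ)) * ∑ k ∈ Finset.range T, ω ^ (-(k : ℤ) * l) / (z₁ - ω ^ k * z₂) := by
  have hT : (T : ℂ) ≠ 0 := Nat.cast_ne_zero.mpr (by rintro rfl; simp at h)
  rw [div_eq_iff (sub_ne_zero.mpr h), mul_assoc, hω.sum_zpow_div_sub_mul_sub_pow h l]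
  field_simp

/-- The partial fraction identity
`z₁^{T−1−[l]} z₂^{[l]} / (z₁^T − z₂^T) = (1/T) Σ_{k=0}^{T−1} ω^{−kl} / (z₁ − ω^k z₂)`
for a primitive `T`-th root of unity `ω`, where `[l]` is the residue of `l` mod `T`. -/
theorem statement12 (T : ℕ) (hT : 1 ≤ T) (ω : ℂ) (hω : IsPrimitiveRoot ω T)
    (l : ℤ) (z₁ z₂ : ℂ) (h : z₁ ^ T ≠ z₂ ^ T) :
    z₁ ^ (T - 1 - (l % (T : ℤ)).toNat) * z₂ ^ (l % (T : ℤ)).toNat / (z₁ ^ T - z₂ ^ T)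
      = (1 / (T : ℂ)) * ∑ k ∈ Finset.range T, ω ^ (-(k : ℤ) * l) / (z₁ - ω ^ k * z₂) :=
  statement12_general T ω hω l z₁ z₂ h
end

section
/- Let T ≥ 1 and let ω ∈ ℂ be a primitive T-th root of unity. Let E_{ij} (i, j ∈ {1,…,T}) denote the matrix units of M_T(ℂ). For λ, μ ∈ ℂ with μ ≠ ω^{−k}λ for all k ∈ {0,…,T−1}, define the cyclotomic r-matrix r(λ, μ) := (1/T) Σ_{k=0}^{T−1} Σ_{i,j=1}^{T} [ω^{k(j−i)} / (μ − ω^{−k}λ)] E_{ij} ⊗ E_{ji} ∈ M_T(ℂ) ⊗ M_T(ℂ), realized via Kronecker products as a T²×T² matrix. For a, b ∈ M_T(ℂ) write (a⊗b)₁₂ := a⊗b⊗1, (a⊗b)₁₃ := a⊗1⊗b, (a⊗b)₂₃ := 1⊗a⊗b and (a⊗b)₃₂ := 1⊗b⊗a in M_T(ℂ)⊗M_T(ℂ)⊗M_T(ℂ) ≅ M_{T³}(ℂ), and extend these placements linearly to r(λ,μ), defining r₁₂(λ,μ), r₁₃(λ,ν), r₂₃(μ,ν) and r₃₂(ν,μ).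 Then for all λ, μ, ν ∈ ℂ such that μ − ω^{−k}λ, ν − ω^{−k}λ and ν − ω^{−k}μ are nonzero for every k ∈ {0,…,T−1}, the classical Yang–Baxter equation holds in M_{T³}(ℂ): [r₁₂(λ,μ), r₁₃(λ,ν)] + [r₁₂(λ,μ), r₂₃(μ,ν)] + [r₃₂(ν,μ), r₁₃(λ,ν)] = 0, where [·,·] is the matrix commutator. -/
open Matrix Kronecker

/-- The scalar coefficient `(1/T) ω^{k(j−i)} / (μ − ω^{−k}λ)` of `E_ij ⊗ E_ji` in the
cyclotomic r-matrix. -/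
noncomputable def cycCoef (T : ℕ) (ω : ℂ) (k : ℕ) (i j : Fin T) (lam mu : ℂ) : ℂ :=
  (1 / (T : ℂ)) * ω ^ ((k : ℤ) * (((j : ℕ) : ℤ) - ((i : ℕ) : ℤ))) / (mu - ω ^ (-(k : ℤ)) * lam)

/-- The placement `r₁₂(λ,μ)` of the cyclotomic r-matrix in `M_T(ℂ)⊗M_T(ℂ)⊗M_T(ℂ)`,
realized via Kronecker products. -/
noncomputable def cycR12 (T : ℕ) (ω lam mu : ℂ) :
    Matrix ((Fin T × Fin T) × Fin T) ((Fin T × Fin T) × Fin T) ℂ :=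
  ∑ k ∈ Finset.range T, ∑ i : Fin T, ∑ j : Fin T,
    cycCoef T ω k i j lam mu •
      ((single i j (1 : ℂ) ⊗ₖ single j i (1 : ℂ))
        ⊗ₖ (1 : Matrix (Fin T) (Fin T) ℂ))

/-- The placement `r₁₃(λ,ν)`. -/
noncomputable def cycR13 (T : ℕ) (ω lam nu : ℂ) :
    Matrix ((Fin T × Fin T) × Fin T) ((Fin T × Fin T) × Fin T) ℂ :=
  ∑ k ∈ Finset.range T, ∑ i : Fin T, ∑ j : Fin T,
    cycCoef T ω k i j lam nu •
      ((single i j (1 : ℂ) ⊗ₖ (1 : Matrix (Fin T) (Fin T) ℂ))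
        ⊗ₖ single j i (1 : ℂ))

/-- The placement `r₂₃(μ,ν)`. -/
noncomputable def cycR23 (T : ℕ) (ω mu nu : ℂ) :
    Matrix ((Fin T × Fin T) × Fin T) ((Fin T × Fin T) × Fin T) ℂ :=
  ∑ k ∈ Finset.range T, ∑ i : Fin T, ∑ j : Fin T,
    cycCoef T ω k i j mu nu •
      (((1 : Matrix (Fin T) (Fin T) ℂ) ⊗ₖ single i j (1 : ℂ))
        ⊗ₖ single j i (1 : ℂ))

/-- The placement `r₃₂(ν,μ)`: the first tensor factor of `r(ν,μ)` is put in slot 3 and the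
second in slot 2. -/
noncomputable def cycR32 (T : ℕ) (ω nu mu : ℂ) :
    Matrix ((Fin T × Fin T) × Fin T) ((Fin T × Fin T) × Fin T) ℂ :=
  ∑ k ∈ Finset.range T, ∑ i : Fin T, ∑ j : Fin T,
    cycCoef T ω k i j nu mu •
      (((1 : Matrix (Fin T) (Fin T) ℂ) ⊗ₖ single j i (1 : ℂ))
        ⊗ₖ single i j (1 : ℂ))

/-!
Write `ψ` for the character `x ↦ ω ^ x` of `ZMod T`. The coefficient of `E_ij ⊗ E_ji` in
`r(λ, μ)` depends only on `j - i`: it is `f_λμ (j - i)` with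
`f_λμ m = (1/T) ∑ₓ ψ (m x) / (μ - ψ (-x) λ)`. For such difference kernels, comparing the
coefficients of the two families of elementary tensors `E_xy ⊗ E_yz ⊗ E_zx` and
`E_xz ⊗ E_yx ⊗ E_zy` reduces the classical Yang–Baxter equation to the functional equation
`f_λμ m * f_λν n = f_λμ (m + n) * f_μν n + f_λν (m + n) * f_νμ m`.
To prove it, expand the left side as a double sum over `x, y` and split every term by the
partial fraction `1/(XY) = 1/(XZ) - w/(YZ)`, where `Z = Y - wX` and `w = ψ (x - y)`. After the
substitution `y ↦ y - x` the two halves factor as `f_λμ (m + n) * f_μν n` and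
`-f_λν (m + n) * f_μν (-m - 1)`, and `x ↦ -x` gives the reflection `f_μν (-m - 1) = -f_νμ m`.
-/

section CharFracSum

variable {R K : Type*} [CommRing R] [Field K] (ψ : AddChar R K)

noncomputable def charFrac (lam mu : K) (m x : R) : K := ψ (m * x) / (mu - ψ (-x) * lam)

theorem charFrac_neg_sub_one (mu nu : K) (m x : R) :
    charFrac ψ mu nu (-m - 1) x = -charFrac ψ nu mu m (-x) := by
  have hψx : ψ x * ψ (-x) = 1 := by
    rw [← AddChar.map_add_eq_mul, add_neg_cancel, AddChar.map_zero_eq_one]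
  have hden : mu - ψ x * nu = -ψ x * (nu - ψ (-x) * mu) := by
    linear_combination (-mu) * hψx
  have hnum : ψ (m * -x) = ψ x * ψ ((-m - 1) * x) := by
    rw [← AddChar.map_add_eq_mul]; congr 1; ring
  rw [charFrac, charFrac, neg_neg, hden, hnum, neg_mul, div_neg, neg_neg,
    mul_div_mul_left _ _ (ψ.val_isUnit x).ne_zero]

theorem mul_inv_eq_mul_inv_sub_mul_inv {X Y Z : K} (w : K) (hX : X ≠ 0) (hY : Y ≠ 0) (hZ : Z ≠ 0)
    (hZ_eq : Z = Y - w * X) :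
    (X * Y)⁻¹ = (X * Z)⁻¹ - w * (Y * Z)⁻¹ := by
  rw [eq_sub_iff_add_eq]
  field_simp
  rw [hZ_eq]
  ring

theorem charFrac_mul_charFrac {lam mu nu : K} (m n x y : R)
    (hX : mu - ψ (-x) * lam ≠ 0) (hY : nu - ψ (-y) * lam ≠ 0) (hZ : nu - ψ (-(y - x)) * mu ≠ 0) :
    charFrac ψ lam mu m x * charFrac ψ lam nu n y
      = charFrac ψ lam mu (m + n) x * charFrac ψ mu nu n (y - x)
        - charFrac ψ lam nu (m + n) y * charFrac ψ mu nu (-m - 1) (y - x) := by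
  have hZ_eq : nu - ψ (-(y - x)) * mu
      = (nu - ψ (-y) * lam) - ψ (x - y) * (mu - ψ (-x) * lam) := by
    rw [mul_sub, ← mul_assoc, ← AddChar.map_add_eq_mul, show -(y - x) = x - y by ring,
      show x - y + -x = -y by ring]
    ring
  have hnum₁ : ψ ((m + n) * x) * ψ (n * (y - x)) = ψ (m * x) * ψ (n * y) := by
    rw [← AddChar.map_add_eq_mul, ← AddChar.map_add_eq_mul]; congr 1; ring
  have hnum₂ : ψ ((m + n) * y) * ψ ((-m - 1) * (y - x)) = ψ (m * x) * ψ (n * y) * ψ (x - y) := by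
    rw [← AddChar.map_add_eq_mul, ← AddChar.map_add_eq_mul, ← AddChar.map_add_eq_mul]
    congr 1; ring
  calc ψ (m * x) / (mu - ψ (-x) * lam) * (ψ (n * y) / (nu - ψ (-y) * lam))
      = ψ (m * x) * ψ (n * y) * ((mu - ψ (-x) * lam) * (nu - ψ (-y) * lam))⁻¹ := by
        rw [div_mul_div_comm, div_eq_mul_inv]
    _ = ψ (m * x) * ψ (n * y) * (((mu - ψ (-x) * lam) * (nu - ψ (-(y - x)) * mu))⁻¹
          - ψ (x - y) * ((nu - ψ (-y) * lam) * (nu - ψ (-(y - x)) * mu))⁻¹) := by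
        rw [mul_inv_eq_mul_inv_sub_mul_inv _ hX hY hZ hZ_eq]
    _ = _ := by
        rw [charFrac, charFrac, charFrac, charFrac, div_mul_div_comm, div_mul_div_comm, hnum₁, hnum₂]
        ring

variable [Fintype R]

noncomputable def charFracSum (lam mu : K) (m : R) : K := ∑ x, charFrac ψ lam mu m x

theorem charFracSum_neg_sub_one (mu nu : K) (m : R) :
    charFracSum ψ mu nu (-m - 1) = -charFracSum ψ nu mu m := by
  rw [charFracSum, charFracSum, ← Finset.sum_neg_distrib]
  exact Fintype.sum_equiv (Equiv.neg R) _ _ (charFrac_neg_sub_one ψ mu nu m)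

theorem charFracSum_mul_charFracSum {lam mu nu : K} (h₁ : ∀ x, mu - ψ x * lam ≠ 0)
    (h₂ : ∀ x, nu - ψ x * lam ≠ 0) (h₃ : ∀ x, nu - ψ x * mu ≠ 0) (m n : R) :
    charFracSum ψ lam mu m * charFracSum ψ lam nu n
      = charFracSum ψ lam mu (m + n) * charFracSum ψ mu nu n
        + charFracSum ψ lam nu (m + n) * charFracSum ψ nu mu m := by
  calc charFracSum ψ lam mu m * charFracSum ψ lam nu n
      = ∑ x, ∑ y, charFrac ψ lam mu m x * charFrac ψ lam nu n y := Finset.sum_mul_sum ..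
    _ = ∑ x, ∑ y, charFrac ψ lam mu (m + n) x * charFrac ψ mu nu n (y - x)
        - ∑ x, ∑ y, charFrac ψ lam nu (m + n) y * charFrac ψ mu nu (-m - 1) (y - x) := by
        simp only [← Finset.sum_sub_distrib]
        exact Finset.sum_congr rfl fun x _ => Finset.sum_congr rfl fun y _ =>
          charFrac_mul_charFrac ψ m n x y (h₁ _) (h₂ _) (h₃ _)
    _ = charFracSum ψ lam mu (m + n) * charFracSum ψ mu nu n
        - charFracSum ψ lam nu (m + n) * charFracSum ψ mu nu (-m - 1) := by
        rw [charFracSum, charFracSum, charFracSum, charFracSum, Finset.sum_mul_sum,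
          Finset.sum_mul_sum, Finset.sum_comm (f := fun x y => charFrac ψ lam nu (m + n) y * _)]
        congr 1
        · exact Finset.sum_congr rfl fun x _ =>
            Fintype.sum_equiv (Equiv.subRight x) _ _ fun _ => rfl
        · exact Finset.sum_congr rfl fun y _ =>
            Fintype.sum_equiv (Equiv.subLeft y) _ _ fun _ => rfl
    _ = _ := by rw [charFracSum_neg_sub_one]; ring

end CharFracSum

section KroneckerSingle

variable {l m l' m' α : Type*}

theorem ite_kronecker [MulZeroClass α] (p : Prop) [Decidable p] (A : Matrix l m α)
    (B : Matrix l' m' α) : (if p then A else 0) ⊗ₖ B = if p then A ⊗ₖ B else 0 := by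
  split_ifs <;> simp

theorem kronecker_ite [MulZeroClass α] (p : Prop) [Decidable p] (A : Matrix l m α)
    (B : Matrix l' m' α) : A ⊗ₖ (if p then B else 0) = if p then A ⊗ₖ B else 0 := by
  split_ifs <;> simp

theorem single_one_mul_single_one [Fintype m] [DecidableEq l] [DecidableEq m] [DecidableEq m']
    [Semiring α] (i : l) (j k : m) (r : m') :
    (single i j 1 : Matrix l m α) * (single k r 1 : Matrix m m' α)
      = if j = k then single i r 1 else 0 := by
  split_ifs with h
  · subst h; simp
  · simp [h]

end KroneckerSingle

section Placements

variable {n α : Type*} [Fintype n] [DecidableEq n] [CommRing α]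

noncomputable def place12 (a : n → n → α) : Matrix ((n × n) × n) ((n × n) × n) α :=
  ∑ i, ∑ j, a i j • ((single i j 1 ⊗ₖ single j i 1) ⊗ₖ 1)

noncomputable def place13 (a : n → n → α) : Matrix ((n × n) × n) ((n × n) × n) α :=
  ∑ i, ∑ j, a i j • ((single i j 1 ⊗ₖ 1) ⊗ₖ single j i 1)

noncomputable def place23 (a : n → n → α) : Matrix ((n × n) × n) ((n × n) × n) α :=
  ∑ i, ∑ j, a i j • ((1 ⊗ₖ single i j 1) ⊗ₖ single j i 1)

noncomputable def cycleUnit (x y z : n) : Matrix ((n × n) × n) ((n × n) × n) α :=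
  (single x y 1 ⊗ₖ single y z 1) ⊗ₖ single z x 1

noncomputable def cycleUnit' (x y z : n) : Matrix ((n × n) × n) ((n × n) × n) α :=
  (single x z 1 ⊗ₖ single y x 1) ⊗ₖ single z y 1

theorem place12_mul_place13 (a b : n → n → α) :
    place12 a * place13 b = ∑ x, ∑ y, ∑ z, (a x y * b y z) • cycleUnit' x y z := by
  simp only [place12, place13, cycleUnit', Finset.sum_mul, Finset.mul_sum, smul_mul_smul_comm,
    ← mul_kronecker_mul, mul_one, one_mul, single_one_mul_single_one, ite_kronecker, smul_ite,
    smul_zero, Fintype.sum_ite_eq']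
  exact (Finset.sum_comm.trans (Finset.sum_congr rfl fun _ _ => Finset.sum_comm)).symm

theorem place13_mul_place12 (a b : n → n → α) :
    place13 b * place12 a = ∑ x, ∑ y, ∑ z, (b x z * a z y) • cycleUnit x y z := by
  simp only [place12, place13, cycleUnit, Finset.sum_mul, Finset.mul_sum, smul_mul_smul_comm,
    ← mul_kronecker_mul, mul_one, one_mul, single_one_mul_single_one, ite_kronecker, smul_ite,
    smul_zero, Fintype.sum_ite_eq']
  rw [Finset.sum_comm]
  exact (Finset.sum_comm.trans (Finset.sum_congr rfl fun _ _ => Finset.sum_comm)).symm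

theorem place12_mul_place23 (a c : n → n → α) :
    place12 a * place23 c = ∑ x, ∑ y, ∑ z, (a x y * c x z) • cycleUnit x y z := by
  simp only [place12, place23, cycleUnit, Finset.sum_mul, Finset.mul_sum, smul_mul_smul_comm,
    ← mul_kronecker_mul, mul_one, one_mul, single_one_mul_single_one, ite_kronecker, kronecker_ite,
    Finset.sum_ite_irrel, Finset.sum_const_zero, smul_ite, smul_zero, Fintype.sum_ite_eq']
  exact Finset.sum_congr rfl fun _ _ => Finset.sum_comm

theorem place23_mul_place12 (a c : n → n → α) :
    place23 c * place12 a = ∑ x, ∑ y, ∑ z, (c y z * a x z) • cycleUnit' x y z := by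
  simp only [place12, place23, cycleUnit', Finset.sum_mul, Finset.mul_sum, smul_mul_smul_comm,
    ← mul_kronecker_mul, mul_one, one_mul, single_one_mul_single_one, ite_kronecker, kronecker_ite,
    smul_ite, smul_zero, Fintype.sum_ite_eq']
  exact Finset.sum_congr rfl fun _ _ => Finset.sum_comm

theorem place23_mul_place13 (b d : n → n → α) :
    place23 d * place13 b = ∑ x, ∑ y, ∑ z, (d y z * b x y) • cycleUnit x y z := by
  simp only [place13, place23, cycleUnit, Finset.sum_mul, Finset.mul_sum, smul_mul_smul_comm,
    ← mul_kronecker_mul, mul_one, one_mul, single_one_mul_single_one, kronecker_ite,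
    Finset.sum_ite_irrel, Finset.sum_const_zero, smul_ite, smul_zero, Fintype.sum_ite_eq']

theorem place13_mul_place23 (b d : n → n → α) :
    place13 b * place23 d = ∑ x, ∑ y, ∑ z, (b x z * d y x) • cycleUnit' x y z := by
  simp only [place13, place23, cycleUnit', Finset.sum_mul, Finset.mul_sum, smul_mul_smul_comm,
    ← mul_kronecker_mul, mul_one, one_mul, single_one_mul_single_one, kronecker_ite,
    Finset.sum_ite_irrel, Finset.sum_const_zero, smul_ite, smul_zero, Fintype.sum_ite_eq']
  exact Finset.sum_comm

theorem cybe_placements (a b c d : n → n → α)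
    (h₁ : ∀ x y z, a x y * b y z = c y z * a x z + b x z * d y x)
    (h₂ : ∀ x y z, b x z * a z y = a x y * c x z + d y z * b x y) :
    ⁅place12 a, place13 b⁆ + ⁅place12 a, place23 c⁆ + ⁅place23 d, place13 b⁆ = 0 := by
  have hcycle' : ∑ x, ∑ y, ∑ z, (a x y * b y z) • (cycleUnit' x y z : Matrix _ _ α)
      = ∑ x, ∑ y, ∑ z, (c y z * a x z) • cycleUnit' x y z
        + ∑ x, ∑ y, ∑ z, (b x z * d y x) • cycleUnit' x y z := by
    simp only [h₁, add_smul, Finset.sum_add_distrib]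
  have hcycle : ∑ x, ∑ y, ∑ z, (b x z * a z y) • (cycleUnit x y z : Matrix _ _ α)
      = ∑ x, ∑ y, ∑ z, (a x y * c x z) • cycleUnit x y z
        + ∑ x, ∑ y, ∑ z, (d y z * b x y) • cycleUnit x y z := by
    simp only [h₂, add_smul, Finset.sum_add_distrib]
  simp only [Ring.lie_def, place12_mul_place13, place13_mul_place12, place12_mul_place23,
    place23_mul_place12, place23_mul_place13, place13_mul_place23, hcycle, hcycle']
  abel

theorem cybe_placements_of_sub {G : Type*} [AddCommGroup G] (ι : n → G) (f g h k : G → α)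
    (hfg : ∀ p q, f p * g q = f (p + q) * h q + g (p + q) * k p) :
    ⁅place12 (fun i j => f (ι j - ι i)), place13 (fun i j => g (ι j - ι i))⁆
      + ⁅place12 (fun i j => f (ι j - ι i)), place23 (fun i j => h (ι j - ι i))⁆
      + ⁅place23 (fun i j => k (ι i - ι j)), place13 (fun i j => g (ι j - ι i))⁆ = 0 := by
  apply cybe_placements
  · intro x y z
    have := hfg (ι y - ι x) (ι z - ι y)
    rw [sub_add_sub_cancel'] at this
    linear_combination this
  · intro x y z
    have := hfg (ι y - ι z) (ι z - ι x)
    rw [sub_add_sub_cancel] at this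
    linear_combination this

end Placements

theorem Finset.sum_sum_sum_smul_comm {ι κ R M : Type*} [Fintype κ] [Semiring R] [AddCommMonoid M]
    [Module R M] (s : Finset ι) (c : ι → κ → κ → R) (B : κ → κ → M) :
    ∑ k ∈ s, ∑ i, ∑ j, c k i j • B i j = ∑ i, ∑ j, (∑ k ∈ s, c k i j) • B i j := by
  simp only [Finset.sum_smul]
  rw [Finset.sum_comm]
  exact Finset.sum_congr rfl fun _ _ => Finset.sum_comm

section Cyclotomic

variable {T : ℕ} [NeZero T] {ω : ℂ} (hω : ω ^ T = 1)

theorem zmodChar_intCast (z : ℤ) : AddChar.zmodChar T hω (z : ZMod T) = ω ^ z := by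
  rw [← zsmul_one, AddChar.map_zsmul_eq_zpow, ← Nat.cast_one, AddChar.zmodChar_apply', pow_one]

theorem sub_zmodChar_mul_ne_zero {lam mu : ℂ} (h : ∀ k < T, mu - ω ^ (-(k : ℤ)) * lam ≠ 0)
    (x : ZMod T) : mu - AddChar.zmodChar T hω x * lam ≠ 0 := by
  have hx : (((-((-x).val : ℤ)) : ℤ) : ZMod T) = x := by
    push_cast
    rw [ZMod.natCast_zmod_val, neg_neg]
  rw [← hx, zmodChar_intCast]
  exact h _ (ZMod.val_lt _)

noncomputable def cycKernel (lam mu : ℂ) (m : ZMod T) : ℂ :=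
  (T : ℂ)⁻¹ * charFracSum (AddChar.zmodChar T hω) lam mu m

theorem sum_range_cycCoef (i j : Fin T) (lam mu : ℂ) :
    ∑ k ∈ Finset.range T, cycCoef T ω k i j lam mu
      = cycKernel hω lam mu ((j : ℕ) - (i : ℕ)) := by
  rw [cycKernel, charFracSum, Finset.mul_sum]
  refine Finset.sum_nbij' (fun k => (k : ZMod T)) ZMod.val (by simp) (by simp [ZMod.val_lt])
    (fun k hk => ZMod.val_cast_of_lt (Finset.mem_range.mp hk)) (fun x _ => ZMod.natCast_zmod_val x)
    fun k _ => ?_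
  have hnum : AddChar.zmodChar T hω (((j : ℕ) - (i : ℕ) : ZMod T) * k)
      = ω ^ ((k : ℤ) * (((j : ℕ) : ℤ) - ((i : ℕ) : ℤ))) := by
    rw [← zmodChar_intCast hω]
    push_cast
    ring_nf
  have hden : AddChar.zmodChar T hω (-(k : ZMod T)) = ω ^ (-(k : ℤ)) := by
    rw [← zmodChar_intCast hω]
    push_cast
    rfl
  rw [cycCoef, charFrac, hnum, hden]
  ring

theorem cycKernel_mul_cycKernel {lam mu nu : ℂ}
    (h₁ : ∀ k < T, mu - ω ^ (-(k : ℤ)) * lam ≠ 0)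
    (h₂ : ∀ k < T, nu - ω ^ (-(k : ℤ)) * lam ≠ 0)
    (h₃ : ∀ k < T, nu - ω ^ (-(k : ℤ)) * mu ≠ 0) (p q : ZMod T) :
    cycKernel hω lam mu p * cycKernel hω lam nu q
      = cycKernel hω lam mu (p + q) * cycKernel hω mu nu q
        + cycKernel hω lam nu (p + q) * cycKernel hω nu mu p := by
  simp only [cycKernel]
  linear_combination (T : ℂ)⁻¹ ^ 2 * charFracSum_mul_charFracSum _
    (sub_zmodChar_mul_ne_zero hω h₁) (sub_zmodChar_mul_ne_zero hω h₂)
    (sub_zmodChar_mul_ne_zero hω h₃) p q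

theorem cycR12_eq_place12 (lam mu : ℂ) :
    cycR12 T ω lam mu = place12 fun i j : Fin T => cycKernel hω lam mu ((j : ℕ) - (i : ℕ)) := by
  rw [cycR12, Finset.sum_sum_sum_smul_comm]
  simp only [sum_range_cycCoef hω]
  rfl

theorem cycR13_eq_place13 (lam nu : ℂ) :
    cycR13 T ω lam nu = place13 fun i j : Fin T => cycKernel hω lam nu ((j : ℕ) - (i : ℕ)) := by
  rw [cycR13, Finset.sum_sum_sum_smul_comm]
  simp only [sum_range_cycCoef hω]
  rfl

theorem cycR23_eq_place23 (mu nu : ℂ) :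
    cycR23 T ω mu nu = place23 fun i j : Fin T => cycKernel hω mu nu ((j : ℕ) - (i : ℕ)) := by
  rw [cycR23, Finset.sum_sum_sum_smul_comm]
  simp only [sum_range_cycCoef hω]
  rfl

theorem cycR32_eq_place23 (nu mu : ℂ) :
    cycR32 T ω nu mu = place23 fun i j : Fin T => cycKernel hω nu mu ((i : ℕ) - (j : ℕ)) := by
  rw [cycR32, Finset.sum_sum_sum_smul_comm, place23, Finset.sum_comm]
  simp only [sum_range_cycCoef hω]

end Cyclotomic

/-- The cyclotomic r-matrix satisfies the (generalized, non-skew-symmetric) classical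
Yang–Baxter equation
`[r₁₂(λ,μ), r₁₃(λ,ν)] + [r₁₂(λ,μ), r₂₃(μ,ν)] + [r₃₂(ν,μ), r₁₃(λ,ν)] = 0`. -/
theorem statement13 (T : ℕ) (hT : 1 ≤ T) (ω : ℂ) (hω : IsPrimitiveRoot ω T)
    (lam mu nu : ℂ)
    (h₁ : ∀ k < T, mu - ω ^ (-(k : ℤ)) * lam ≠ 0)
    (h₂ : ∀ k < T, nu - ω ^ (-(k : ℤ)) * lam ≠ 0)
    (h₃ : ∀ k < T, nu - ω ^ (-(k : ℤ)) * mu ≠ 0) :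
    ⁅cycR12 T ω lam mu, cycR13 T ω lam nu⁆ + ⁅cycR12 T ω lam mu, cycR23 T ω mu nu⁆
        + ⁅cycR32 T ω nu mu, cycR13 T ω lam nu⁆ = 0 := by
  have : NeZero T := ⟨by omega⟩
  have hω₁ := hω.pow_eq_one
  rw [cycR12_eq_place12 hω₁, cycR13_eq_place13 hω₁, cycR23_eq_place23 hω₁,
    cycR32_eq_place23 hω₁]
  exact cybe_placements_of_sub (fun i : Fin T => ((i : ℕ) : ZMod T)) _ _ _ _
    (cycKernel_mul_cycKernel hω₁ h₁ h₂ h₃)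
end

section
/- Let n ≥ 1 and let R : M_n(ℂ) → M_n(ℂ) be a linear solution of the modified classical Yang–Baxter equation for the commutator bracket on M_n(ℂ). Let F, G : M_n(ℂ) → M_n(ℂ) be differentiable conjugation-equivariant maps. Define the vector fields V_F(L) := (1/2)[R(F(L)), L] and V_G(L) := (1/2)[R(G(L)), L] on M_n(ℂ). Then V_F and V_G commute: for every L ∈ M_n(ℂ), DV_F(L)[V_G(L)] = DV_G(L)[V_F(L)], where D denotes the Fréchet derivative. (Equivalently, since [F(L), L] = 0 = [G(L), L], one has V_F(L) = [R_±(F(L)), L] with R_± = (1/2)(R ± id), so the flows of the hierarchy of Lax equations ∂_{t^k} L = [R_±(F_k(L)), L] generated by conjugation-equivariant maps are pairwise compatible.) -/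
/-!
Differentiating the equivariance `F (g L g⁻¹) = g F(L) g⁻¹` along the curve `g = 1 + t A` at
`t = 0` gives `DF(L)[⁅A, L⁆] = ⁅A, F(L)⁆`; for `A = L` this says `⁅F(L), L⁆ = 0`. Hence, writing
`a = F(L)` and `b = G(L)`, the two sides are `¼ (⁅R ⁅R b, a⁆, L⁆ + ⁅R a, ⁅R b, L⁆⁆)` and the same
expression with `a` and `b` swapped. By the mCYBE and the Jacobi identity their difference is
`-¼ ⁅⁅a, b⁆, L⁆`, which vanishes because `a` and `b` commute with `L`.
-/

attribute [local instance] Matrix.normedAddCommGroup Matrix.normedSpace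

open Filter Topology

section ModifiedCYBE

variable {K L : Type*} [CommRing K] [LieRing L] [Module K L]

def IsModifiedCYBESolution (R : L →ₗ[K] L) : Prop :=
  ∀ X Y : L, ⁅R X, R Y⁆ - R (⁅R X, Y⁆ + ⁅X, R Y⁆) = -⁅X, Y⁆

theorem IsModifiedCYBESolution.lie_map_lie_add_symm {R : L →ₗ[K] L}
    (hR : IsModifiedCYBESolution R) {a b x : L} (ha : ⁅a, x⁆ = 0) (hb : ⁅b, x⁆ = 0) :
    ⁅R ⁅R b, a⁆, x⁆ + ⁅R a, ⁅R b, x⁆⁆ = ⁅R ⁅R a, b⁆, x⁆ + ⁅R b, ⁅R a, x⁆⁆ := by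
  have hRba : R ⁅R b, a⁆ = R ⁅R a, b⁆ - (⁅R a, R b⁆ + ⁅a, b⁆) := by
    have h := hR a b
    rw [← lie_skew a (R b), map_add, map_neg] at h
    linear_combination (norm := abel) h
  have hab : ⁅⁅a, b⁆, x⁆ = 0 := by rw [lie_lie, ha, hb, lie_zero, lie_zero, sub_zero]
  rw [hRba, sub_lie, add_lie, hab, lie_lie]
  abel

end ModifiedCYBE

theorem hasDerivAt_smul_of_continuousAt {𝕜 E : Type*} [NontriviallyNormedField 𝕜]
    [NormedAddCommGroup E] [NormedSpace 𝕜 E] {k : 𝕜 → E} (hk : ContinuousAt k 0) :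
    HasDerivAt (fun t => t • k t) (k 0) 0 := by
  rw [hasDerivAt_iff_tendsto_slope_zero]
  simp only [zero_add, zero_smul, sub_zero]
  refine (hk.tendsto.mono_left nhdsWithin_le_nhds).congr' ?_
  filter_upwards [self_mem_nhdsWithin] with t ht
  rw [smul_smul, inv_mul_cancel₀ ht, one_smul]

namespace Matrix

variable {𝕜 ι : Type*} [NontriviallyNormedField 𝕜] [Fintype ι] [DecidableEq ι]

theorem eventually_isUnit_one_add_smul (A : Matrix ι ι 𝕜) :
    ∀ᶠ t in 𝓝 (0 : 𝕜), IsUnit (1 + t • A) := by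
  have hdet : ContinuousAt (fun t : 𝕜 => (1 + t • A).det) 0 := by fun_prop
  filter_upwards [hdet.eventually_ne (by simp : (1 + (0 : 𝕜) • A).det ≠ 0)] with t ht
  exact (isUnit_iff_isUnit_det _).2 (isUnit_iff_ne_zero.2 ht)

theorem continuousAt_inv_one_add_smul (A : Matrix ι ι 𝕜) :
    ContinuousAt (fun t : 𝕜 => (1 + t • A)⁻¹) 0 := by
  have hinv : ContinuousAt Inv.inv (1 + (0 : 𝕜) • A) := by
    refine continuousAt_matrix_inv _ ?_
    simp [Ring.inverse_eq_inv']
  have hcurve : ContinuousAt (fun t : 𝕜 => 1 + t • A) 0 := by fun_prop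
  exact ContinuousAt.comp (f := fun t : 𝕜 => 1 + t • A) hinv hcurve

theorem eventually_conj_one_add_smul_eq (A X : Matrix ι ι 𝕜) :
    ∀ᶠ t in 𝓝 (0 : 𝕜), (1 + t • A) * X * (1 + t • A)⁻¹ = X + t • (⁅A, X⁆ * (1 + t • A)⁻¹) := by
  -- `g X g⁻¹ - X = (g X - X g) g⁻¹`, so only continuity of `t ↦ g⁻¹` is needed, not its derivative.
  filter_upwards [eventually_isUnit_one_add_smul A] with t ht
  have hdet := (isUnit_iff_isUnit_det _).1 ht
  calc (1 + t • A) * X * (1 + t • A)⁻¹ = (X * (1 + t • A) + t • ⁅A, X⁆) * (1 + t • A)⁻¹ := by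
        rw [Ring.lie_def]; congr 1
        simp only [add_mul, mul_add, one_mul, mul_one, smul_mul_assoc, mul_smul_comm, smul_sub]
        abel
    _ = X + t • (⁅A, X⁆ * (1 + t • A)⁻¹) := by
        rw [add_mul, mul_nonsing_inv_cancel_right _ _ hdet, smul_mul_assoc]

theorem hasDerivAt_conj_one_add_smul (A X : Matrix ι ι 𝕜) :
    HasDerivAt (fun t : 𝕜 => (1 + t • A) * X * (1 + t • A)⁻¹) ⁅A, X⁆ 0 := by
  have hk : ContinuousAt (fun t : 𝕜 => ⁅A, X⁆ * (1 + t • A)⁻¹) 0 :=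
    continuousAt_const.mul (continuousAt_inv_one_add_smul A)
  have h := (hasDerivAt_smul_of_continuousAt hk).const_add X
  simp only [zero_smul, add_zero, inv_one, mul_one] at h
  exact h.congr_of_eventuallyEq (eventually_conj_one_add_smul_eq A X)

section Bracket

variable [CompleteSpace 𝕜] {F : Matrix ι ι 𝕜 → Matrix ι ι 𝕜} {L : Matrix ι ι 𝕜}

variable (𝕜 ι) in
noncomputable def lieCLM : Matrix ι ι 𝕜 →L[𝕜] Matrix ι ι 𝕜 →L[𝕜] Matrix ι ι 𝕜 :=
  (LinearMap.mul 𝕜 (Matrix ι ι 𝕜) - (LinearMap.mul 𝕜 (Matrix ι ι 𝕜)).flip).toContinuousBilinearMap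

theorem hasFDerivAt_lie_map_apply_self (R : Matrix ι ι 𝕜 →ₗ[𝕜] Matrix ι ι 𝕜)
    (hFd : DifferentiableAt 𝕜 F L) :
    HasFDerivAt (fun X => lieCLM 𝕜 ι (R (F X)) X)
      ((lieCLM 𝕜 ι).precompR _ (R (F L)) (.id 𝕜 _) +
        (lieCLM 𝕜 ι).precompL _ ((LinearMap.toContinuousLinearMap R).comp (fderiv 𝕜 F L)) L) L :=
  (lieCLM 𝕜 ι).hasFDerivAt_of_bilinear
    ((LinearMap.toContinuousLinearMap R).hasFDerivAt.comp L hFd.hasFDerivAt) (hasFDerivAt_id L)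

theorem differentiableAt_lie_map_apply_self (R : Matrix ι ι 𝕜 →ₗ[𝕜] Matrix ι ι 𝕜)
    (hFd : DifferentiableAt 𝕜 F L) : DifferentiableAt 𝕜 (fun X => ⁅R (F X), X⁆) L :=
  (hasFDerivAt_lie_map_apply_self R hFd).differentiableAt

theorem fderiv_lie_map_apply_self (R : Matrix ι ι 𝕜 →ₗ[𝕜] Matrix ι ι 𝕜)
    (hFd : DifferentiableAt 𝕜 F L) (W : Matrix ι ι 𝕜) :
    fderiv 𝕜 (fun X => ⁅R (F X), X⁆) L W = ⁅R (F L), W⁆ + ⁅R (fderiv 𝕜 F L W), L⁆ :=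
  congrArg (· W) (hasFDerivAt_lie_map_apply_self R hFd).fderiv

end Bracket

end Matrix

def IsConjEquivariant {R ι : Type*} [CommRing R] [Fintype ι] [DecidableEq ι]
    (F : Matrix ι ι R → Matrix ι ι R) : Prop :=
  ∀ g X : Matrix ι ι R, IsUnit g → F (g * X * g⁻¹) = g * F X * g⁻¹

namespace IsConjEquivariant

attribute [local instance 100] LieRing.ofAssociativeRing

variable {𝕜 ι : Type*} [NontriviallyNormedField 𝕜] [Fintype ι] [DecidableEq ι]
  {F : Matrix ι ι 𝕜 → Matrix ι ι 𝕜} {L : Matrix ι ι 𝕜}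

theorem fderiv_lie (hF : IsConjEquivariant F) (hFd : DifferentiableAt 𝕜 F L)
    (A : Matrix ι ι 𝕜) : fderiv 𝕜 F L ⁅A, L⁆ = ⁅A, F L⁆ := by
  have hcomp : HasDerivAt (fun t : 𝕜 => F ((1 + t • A) * L * (1 + t • A)⁻¹))
      (fderiv 𝕜 F L ⁅A, L⁆) 0 :=
    hFd.hasFDerivAt.comp_hasDerivAt_of_eq 0 (Matrix.hasDerivAt_conj_one_add_smul A L) (by simp)
  have hconj : HasDerivAt (fun t : 𝕜 => F ((1 + t • A) * L * (1 + t • A)⁻¹)) ⁅A, F L⁆ 0 := by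
    refine (Matrix.hasDerivAt_conj_one_add_smul A (F L)).congr_of_eventuallyEq ?_
    filter_upwards [Matrix.eventually_isUnit_one_add_smul A] with t ht using hF _ _ ht
  exact hcomp.unique hconj

theorem lie_apply_self (hF : IsConjEquivariant F) (hFd : DifferentiableAt 𝕜 F L) :
    ⁅F L, L⁆ = 0 := by
  have h := hF.fderiv_lie hFd L
  rw [lie_self L, map_zero, ← lie_skew, eq_comm, neg_eq_zero] at h
  exact h

theorem fderiv_smul_lie_map_apply_smul_lie [CompleteSpace 𝕜] (hF : IsConjEquivariant F)
    (hFd : DifferentiableAt 𝕜 F L) (R : Matrix ι ι 𝕜 →ₗ[𝕜] Matrix ι ι 𝕜) (c : 𝕜)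
    (B : Matrix ι ι 𝕜) :
    fderiv 𝕜 (fun X => c • ⁅R (F X), X⁆) L (c • ⁅B, L⁆)
      = (c * c) • (⁅R ⁅B, F L⁆, L⁆ + ⁅R (F L), ⁅B, L⁆⁆) := by
  -- `fderiv_fun_const_smul` is phrased with the norm topology on matrices, which is not reducibly
  -- the one in the goal, so it cannot be used by `rw` directly.
  have hc : fderiv 𝕜 (fun X => c • ⁅R (F X), X⁆) L = c • fderiv 𝕜 (fun X => ⁅R (F X), X⁆) L :=
    fderiv_fun_const_smul (Matrix.differentiableAt_lie_map_apply_self R hFd) c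
  rw [hc, _root_.smul_apply, map_smul, Matrix.fderiv_lie_map_apply_self R hFd, hF.fderiv_lie hFd,
    mul_smul, add_comm]

end IsConjEquivariant

theorem statement17_general (n : ℕ)
    (R : Matrix (Fin n) (Fin n) ℂ →ₗ[ℂ] Matrix (Fin n) (Fin n) ℂ)
    (hR : ∀ X Y : Matrix (Fin n) (Fin n) ℂ,
      ⁅R X, R Y⁆ - R (⁅R X, Y⁆ + ⁅X, R Y⁆) = -⁅X, Y⁆)
    (F G : Matrix (Fin n) (Fin n) ℂ → Matrix (Fin n) (Fin n) ℂ)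
    (hFd : Differentiable ℂ F) (hGd : Differentiable ℂ G)
    (hFe : ∀ g X : Matrix (Fin n) (Fin n) ℂ, IsUnit g → F (g * X * g⁻¹) = g * F X * g⁻¹)
    (hGe : ∀ g X : Matrix (Fin n) (Fin n) ℂ, IsUnit g → G (g * X * g⁻¹) = g * G X * g⁻¹) :
    ∀ L : Matrix (Fin n) (Fin n) ℂ,
      fderiv ℂ (fun X => (2 : ℂ)⁻¹ • ⁅R (F X), X⁆) L ((2 : ℂ)⁻¹ • ⁅R (G L), L⁆)
        = fderiv ℂ (fun X => (2 : ℂ)⁻¹ • ⁅R (G X), X⁆) L ((2 : ℂ)⁻¹ • ⁅R (F L), L⁆) := by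
  intro L
  let _ : LieRing (Matrix (Fin n) (Fin n) ℂ) := LieRing.ofAssociativeRing
  have hCYBE : IsModifiedCYBESolution R := hR
  rw [IsConjEquivariant.fderiv_smul_lie_map_apply_smul_lie hFe (hFd L),
    IsConjEquivariant.fderiv_smul_lie_map_apply_smul_lie hGe (hGd L),
    hCYBE.lie_map_lie_add_symm (IsConjEquivariant.lie_apply_self hFe (hFd L))
      (IsConjEquivariant.lie_apply_self hGe (hGd L))]

/-- For a linear solution `R` of the mCYBE on `M_n(ℂ)` and differentiable
conjugation-equivariant maps `F, G`, the vector fields `V_F(L) = (1/2)[R(F(L)), L]` and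
`V_G(L) = (1/2)[R(G(L)), L]` commute: `DV_F(L)[V_G(L)] = DV_G(L)[V_F(L)]`. -/
theorem statement17 (n : ℕ) (hn : 1 ≤ n)
    (R : Matrix (Fin n) (Fin n) ℂ →ₗ[ℂ] Matrix (Fin n) (Fin n) ℂ)
    (hR : ∀ X Y : Matrix (Fin n) (Fin n) ℂ,
      ⁅R X, R Y⁆ - R (⁅R X, Y⁆ + ⁅X, R Y⁆) = -⁅X, Y⁆)
    (F G : Matrix (Fin n) (Fin n) ℂ → Matrix (Fin n) (Fin n) ℂ)
    (hFd : Differentiable ℂ F) (hGd : Differentiable ℂ G)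
    (hFe : ∀ g X : Matrix (Fin n) (Fin n) ℂ, IsUnit g → F (g * X * g⁻¹) = g * F X * g⁻¹)
    (hGe : ∀ g X : Matrix (Fin n) (Fin n) ℂ, IsUnit g → G (g * X * g⁻¹) = g * G X * g⁻¹) :
    ∀ L : Matrix (Fin n) (Fin n) ℂ,
      fderiv ℂ (fun X => (2 : ℂ)⁻¹ • ⁅R (F X), X⁆) L ((2 : ℂ)⁻¹ • ⁅R (G L), L⁆)
        = fderiv ℂ (fun X => (2 : ℂ)⁻¹ • ⁅R (G X), X⁆) L ((2 : ℂ)⁻¹ • ⁅R (F L), L⁆) :=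
  statement17_general n R hR F G hFd hGd hFe hGe
end

section
/- Let n ≥ 1 and let F, G : M_n(ℂ) → M_n(ℂ) be conjugation-equivariant maps (no differentiability assumed). Then for every X ∈ M_n(ℂ): (i) [F(X), X] = 0; (ii) [F(X), G(X)] = 0. In particular, for a family F_1, …, F_N of conjugation-equivariant maps and any L₀ ∈ M_n(ℂ), the matrices F_1(L₀), …, F_N(L₀) pairwise commute and each commutes with L₀. -/
/-!
If `Y` commutes with `X`, then for all but finitely many scalars `c` (those outside the
spectrum of `Y`) the matrix `g = c - Y` is invertible and still commutes with `X`, so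
`g X g⁻¹ = X`. Equivariance then gives `F X = g (F X) g⁻¹`, i.e. `F X` commutes with `g`, hence
with `Y`. Taking `Y = X` and then `Y = G X` gives both claims.
-/

namespace Matrix

variable {m K : Type*} [Fintype m] [DecidableEq m] [Field K]

theorem exists_isUnit_algebraMap_sub [Infinite K] (Y : Matrix m m K) :
    ∃ c : K, IsUnit (algebraMap K (Matrix m m K) c - Y) := by
  obtain ⟨c, hc⟩ := Y.finite_spectrum.infinite_compl.nonempty
  exact ⟨c, spectrum.notMem_iff.mp hc⟩

theorem mul_mul_nonsing_inv_eq_iff_commute {g A : Matrix m m K} (hg : IsUnit g) :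
    g * A * g⁻¹ = A ↔ Commute g A := by
  have hdet : IsUnit g.det := (isUnit_iff_isUnit_det g).mp hg
  constructor
  · intro h
    calc g * A = g * A * g⁻¹ * g := (nonsing_inv_mul_cancel_right _ _ hdet).symm
      _ = A * g := by rw [h]
  · intro h
    rw [h.eq, mul_nonsing_inv_cancel_right _ _ hdet]

variable [Infinite K] {F G : Matrix m m K → Matrix m m K}

theorem commute_apply_of_commute
    (hF : ∀ g X : Matrix m m K, IsUnit g → F (g * X * g⁻¹) = g * F X * g⁻¹)
    {X Y : Matrix m m K} (hXY : Commute X Y) : Commute (F X) Y := by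
  obtain ⟨c, hg⟩ := Y.exists_isUnit_algebraMap_sub
  set g := algebraMap K (Matrix m m K) c - Y
  have hgX : g * X * g⁻¹ = X :=
    (mul_mul_nonsing_inv_eq_iff_commute hg).mpr
      ((Algebra.commute_algebraMap_left c X).sub_left hXY.symm)
  have hgFX : Commute g (F X) :=
    (mul_mul_nonsing_inv_eq_iff_commute hg).mp (by rw [← hF g X hg, hgX])
  have hY : Y = algebraMap K (Matrix m m K) c - g := (sub_sub_cancel _ _).symm
  rw [hY]
  exact ((Algebra.commute_algebraMap_left c (F X)).sub_left hgFX).symm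

theorem commute_apply_self
    (hF : ∀ g X : Matrix m m K, IsUnit g → F (g * X * g⁻¹) = g * F X * g⁻¹)
    (X : Matrix m m K) : Commute (F X) X :=
  commute_apply_of_commute hF (Commute.refl X)

theorem commute_apply_apply
    (hF : ∀ g X : Matrix m m K, IsUnit g → F (g * X * g⁻¹) = g * F X * g⁻¹)
    (hG : ∀ g X : Matrix m m K, IsUnit g → G (g * X * g⁻¹) = g * G X * g⁻¹)
    (X : Matrix m m K) : Commute (F X) (G X) :=
  commute_apply_of_commute hF (commute_apply_self hG X).symm

end Matrix

theorem statement19_general (n : ℕ)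
    (F G : Matrix (Fin n) (Fin n) ℂ → Matrix (Fin n) (Fin n) ℂ)
    (hF : ∀ g X : Matrix (Fin n) (Fin n) ℂ, IsUnit g → F (g * X * g⁻¹) = g * F X * g⁻¹)
    (hG : ∀ g X : Matrix (Fin n) (Fin n) ℂ, IsUnit g → G (g * X * g⁻¹) = g * G X * g⁻¹)
    (N : ℕ) (FF : Fin N → Matrix (Fin n) (Fin n) ℂ → Matrix (Fin n) (Fin n) ℂ)
    (hFF : ∀ (k : Fin N) (g X : Matrix (Fin n) (Fin n) ℂ), IsUnit g →
      FF k (g * X * g⁻¹) = g * FF k X * g⁻¹)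
    (L₀ : Matrix (Fin n) (Fin n) ℂ) :
    (∀ X : Matrix (Fin n) (Fin n) ℂ, ⁅F X, X⁆ = 0) ∧
    (∀ X : Matrix (Fin n) (Fin n) ℂ, ⁅F X, G X⁆ = 0) ∧
    (∀ k l : Fin N, ⁅FF k L₀, FF l L₀⁆ = 0 ∧ ⁅FF k L₀, L₀⁆ = 0) := by
  simp only [← commute_iff_lie_eq]
  exact ⟨Matrix.commute_apply_self hF, Matrix.commute_apply_apply hF hG, fun k l =>
    ⟨Matrix.commute_apply_apply (hFF k) (hFF l) L₀, Matrix.commute_apply_self (hFF k) L₀⟩⟩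

/-- Conjugation-equivariant maps `F, G` on `M_n(ℂ)` satisfy `[F(X), X] = 0` and
`[F(X), G(X)] = 0` for every `X`; in particular, for a family `F₁, …, F_N` of
conjugation-equivariant maps and any `L₀`, the matrices `F_k(L₀)` pairwise commute and
each commutes with `L₀`. -/
theorem statement19 (n : ℕ) (hn : 1 ≤ n)
    (F G : Matrix (Fin n) (Fin n) ℂ → Matrix (Fin n) (Fin n) ℂ)
    (hF : ∀ g X : Matrix (Fin n) (Fin n) ℂ, IsUnit g → F (g * X * g⁻¹) = g * F X * g⁻¹)
    (hG : ∀ g X : Matrix (Fin n) (Fin n) ℂ, IsUnit g → G (g * X * g⁻¹) = g * G X * g⁻¹)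
    (N : ℕ) (FF : Fin N → Matrix (Fin n) (Fin n) ℂ → Matrix (Fin n) (Fin n) ℂ)
    (hFF : ∀ (k : Fin N) (g X : Matrix (Fin n) (Fin n) ℂ), IsUnit g →
      FF k (g * X * g⁻¹) = g * FF k X * g⁻¹)
    (L₀ : Matrix (Fin n) (Fin n) ℂ) :
    (∀ X : Matrix (Fin n) (Fin n) ℂ, ⁅F X, X⁆ = 0) ∧
    (∀ X : Matrix (Fin n) (Fin n) ℂ, ⁅F X, G X⁆ = 0) ∧
    (∀ k l : Fin N, ⁅FF k L₀, FF l L₀⁆ = 0 ∧ ⁅FF k L₀, L₀⁆ = 0) :=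
  statement19_general n F G hF hG N FF hFF L₀
end
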